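/- arXiv:2506.17066 — 5 statements merged into one kernel-verified Lean document; each statement's English description precedes it below -/
import Mathlib

section
/- Let (U, S) be a Set Cover instance and let H = (V, E) be the hypergraph constructed from it as described. Then the minimum core size of H equals the minimum cardinality of a set cover of (U, S). -/
variable {α : Type*} [DecidableEq α]

/-- `Assim E C v` : vertex `v` eventually gets assimilated when the propagation
process of Definition 3 (core) is run from the initial set `C` on the edge family `E`:
`v` is assimilated if it lies in `C`, or if it lies in some edge `e ∈ E`
all of whose other vertices are assimilated (i.e. `|e ∩ assimilated| = |e| - 1`,
so `e` can extend the assimilated set by `v`). -/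
inductive Assim (E : Finset (Finset α)) (C : Finset α) : α → Prop
  | base (v : α) : v ∈ C → Assim E C v
  | step (e : Finset α) (v : α) : e ∈ E → v ∈ e →
      (∀ w ∈ e, w ≠ v → Assim E C w) → Assim E C v

/-- `C` is a core of the hypergraph `(V, E)`: the propagation process started from `C`
terminates with every edge removed (covered), i.e. every vertex of every edge is
eventually assimilated. -/
def IsCore (V : Finset α) (E : Finset (Finset α)) (C : Finset α) : Prop :=
  C ⊆ V ∧ ∀ e ∈ E, ∀ v ∈ e, Assim E C v

/-- The minimum core size of the hypergraph `(V, E)`. -/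
noncomputable def minCoreSize (V : Finset α) (E : Finset (Finset α)) : ℕ :=
  sInf {k | ∃ C, IsCore V E C ∧ C.card = k}

/-- The vertex set `V_i = C ∪ ⋃_{j=1}^{i} ⋃_{e ∈ L j} e` determined by a core `C`
and layers `L`. -/
def layerVerts (C : Finset α) (L : ℕ → Finset (Finset α)) (i : ℕ) : Finset α :=
  C ∪ (Finset.Icc 1 i).biUnion fun j => (L j).biUnion id

/-- `L 1, …, L r` is a partition of `E` into layers witnessing radius `r` for the
core `C`: the layers are disjoint, their union is `E`, and every edge `e` in
layer `i` satisfies `|e ∩ V_{i-1}| = |e| - 1`. -/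
def IsLayering (E : Finset (Finset α)) (C : Finset α)
    (L : ℕ → Finset (Finset α)) (r : ℕ) : Prop :=
  (∀ i ∈ Finset.Icc 1 r, L i ⊆ E) ∧
  (∀ i ∈ Finset.Icc 1 r, ∀ j ∈ Finset.Icc 1 r, i ≠ j → Disjoint (L i) (L j)) ∧
  (Finset.Icc 1 r).biUnion L = E ∧
  ∀ i ∈ Finset.Icc 1 r, ∀ e ∈ L i, (e ∩ layerVerts C L (i - 1)).card = e.card - 1

/-- The radius of a core `C` : the minimum `r` such that `E` can be partitioned
into `r` layers as in the definition of the radius. -/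
noncomputable def coreRadius (E : Finset (Finset α)) (C : Finset α) : ℕ :=
  sInf {r | ∃ L, IsLayering E C L r}


section SetCover

variable {β : Type*} [DecidableEq β]

/-- Vertex type for the Set Cover reduction: vertices `s_i`, `s'_i` (for sets `i`)
and `u_j`, `u'_j` (for universe elements `j`). -/
abbrev SCVert (β : Type*) := (Finset β ⊕ Finset β) ⊕ (β ⊕ β)

/-- the vertex `s_i` -/
def vS (i : Finset β) : SCVert β := Sum.inl (Sum.inl i)
/-- the vertex `s'_i` -/
def vS' (i : Finset β) : SCVert β := Sum.inl (Sum.inr i)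
/-- the vertex `u_j` -/
def vU (u : β) : SCVert β := Sum.inr (Sum.inl u)
/-- the vertex `u'_j` -/
def vU' (u : β) : SCVert β := Sum.inr (Sum.inr u)

/-- `V_1 = {s_i, s'_i : S_i ∈ S}` -/
def scV1 (S : Finset (Finset β)) : Finset (SCVert β) := S.image vS ∪ S.image vS'

/-- `V_2 = {u_j, u'_j : u_j ∈ U}` -/
def scV2 (U : Finset β) : Finset (SCVert β) := U.image vU ∪ U.image vU'

/-- `E_1 = {{s_i, s'_i} : S_i ∈ S}` -/
def scE1 (S : Finset (Finset β)) : Finset (Finset (SCVert β)) :=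
  S.image fun i => {vS i, vS' i}

/-- `E_2 = {{s_i, s'_i, u_j}, {s_i, s'_i, u'_j} : S_i ∈ S, u_j ∈ S_i}` -/
def scE2 (S : Finset (Finset β)) : Finset (Finset (SCVert β)) :=
  S.biUnion fun i =>
    i.image (fun u => ({vS i, vS' i, vU u} : Finset (SCVert β))) ∪
    i.image (fun u => ({vS i, vS' i, vU' u} : Finset (SCVert β)))

/-- `E_3 = {V_2 ∪ {s_i}, V_2 ∪ {s'_i} : S_i ∈ S}` -/
def scE3 (U : Finset β) (S : Finset (Finset β)) : Finset (Finset (SCVert β)) :=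
  S.image (fun i => insert (vS i) (scV2 U)) ∪ S.image (fun i => insert (vS' i) (scV2 U))

/-- The vertex set `V = V_1 ∪ V_2` of the constructed hypergraph. -/
def scV (U : Finset β) (S : Finset (Finset β)) : Finset (SCVert β) := scV1 S ∪ scV2 U

/-- The edge set `E = E_1 ∪ E_2 ∪ E_3` of the constructed hypergraph. -/
def scE (U : Finset β) (S : Finset (Finset β)) : Finset (Finset (SCVert β)) :=
  scE1 S ∪ scE2 S ∪ scE3 U S

/-! ### Auxiliary lemmas for the reduction -/

open Classical in
/-- Map a vertex of the constructed hypergraph to a set of the instance. -/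
noncomputable def vertToSet (S : Finset (Finset β)) : SCVert β → Finset β
  | Sum.inl (Sum.inl i) => i
  | Sum.inl (Sum.inr i) => i
  | Sum.inr (Sum.inl u) => if h : ∃ i ∈ S, u ∈ i then h.choose else ∅
  | Sum.inr (Sum.inr u) => if h : ∃ i ∈ S, u ∈ i then h.choose else ∅

/-- `u` is "good" for the core `C` : either its pair touches `C`, or some set
containing `u` has its s-pair touching `C`. -/
def Good (S : Finset (Finset β)) (C : Finset (SCVert β)) (u : β) : Prop :=
  vU u ∈ C ∨ vU' u ∈ C ∨ ∃ i ∈ S, u ∈ i ∧ (vS i ∈ C ∨ vS' i ∈ C)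

/-- Induction invariant for the hard direction. -/
def Pprop (U : Finset β) (S : Finset (Finset β)) (C : Finset (SCVert β)) :
    SCVert β → Prop
  | Sum.inl (Sum.inl i) => vS i ∈ C ∨ vS' i ∈ C ∨ ∀ u ∈ U, Good S C u
  | Sum.inl (Sum.inr i) => vS i ∈ C ∨ vS' i ∈ C ∨ ∀ u ∈ U, Good S C u
  | Sum.inr (Sum.inl u) => Good S C u
  | Sum.inr (Sum.inr u) => Good S C u

variable {U : Finset β} {S : Finset (Finset β)} {C : Finset (SCVert β)}

lemma mem_scV2 {v : SCVert β} : v ∈ scV2 U ↔ ∃ u ∈ U, v = vU u ∨ v = vU' u := by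
  simp only [scV2, Finset.mem_union, Finset.mem_image, vU, vU']
  aesop

lemma mem_scE_iff {e : Finset (SCVert β)} :
    e ∈ scE U S ↔
      (∃ i ∈ S, e = {vS i, vS' i}) ∨
      (∃ i ∈ S, ∃ u ∈ i, e = {vS i, vS' i, vU u} ∨ e = {vS i, vS' i, vU' u}) ∨
      (∃ i ∈ S, e = insert (vS i) (scV2 U) ∨ e = insert (vS' i) (scV2 U)) := by
  constructor
  · intro he
    simp only [scE, scE1, scE2, scE3, Finset.mem_union, Finset.mem_biUnion,
      Finset.mem_image] at he
    rcases he with (⟨i, hi, rfl⟩ | ⟨i, hi, ⟨u, hu, rfl⟩ | ⟨u, hu, rfl⟩⟩) |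
        (⟨i, hi, rfl⟩ | ⟨i, hi, rfl⟩)
    · exact Or.inl ⟨i, hi, rfl⟩
    · exact Or.inr (Or.inl ⟨i, hi, u, hu, Or.inl rfl⟩)
    · exact Or.inr (Or.inl ⟨i, hi, u, hu, Or.inr rfl⟩)
    · exact Or.inr (Or.inr ⟨i, hi, Or.inl rfl⟩)
    · exact Or.inr (Or.inr ⟨i, hi, Or.inr rfl⟩)
  · intro he
    simp only [scE, scE1, scE2, scE3, Finset.mem_union, Finset.mem_biUnion,
      Finset.mem_image]
    rcases he with ⟨i, hi, rfl⟩ | ⟨i, hi, u, hu, rfl | rfl⟩ | ⟨i, hi, rfl | rfl⟩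
    · exact Or.inl (Or.inl ⟨i, hi, rfl⟩)
    · exact Or.inl (Or.inr ⟨i, hi, Or.inl ⟨u, hu, rfl⟩⟩)
    · exact Or.inl (Or.inr ⟨i, hi, Or.inr ⟨u, hu, rfl⟩⟩)
    · exact Or.inr (Or.inl ⟨i, hi, rfl⟩)
    · exact Or.inr (Or.inr ⟨i, hi, rfl⟩)

/-- The key induction: every assimilated vertex satisfies the invariant. -/
lemma assim_invariant (hsub : ∀ i ∈ S, i ⊆ U) {v : SCVert β}
    (h : Assim (scE U S) C v) : Pprop U S C v := by
  induction h with
  | base v hv =>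
    rcases v with (i | i) | (u | u)
    · exact Or.inl hv
    · exact Or.inr (Or.inl hv)
    · exact Or.inl hv
    · exact Or.inr (Or.inl hv)
  | step e v he hv hw ih =>
    rcases mem_scE_iff.1 he with ⟨i, hiS, rfl⟩ | ⟨i, hiS, u, hui, rfl | rfl⟩ |
        ⟨i, hiS, rfl | rfl⟩
    · -- E₁ edge {s_i, s'_i}
      rcases Finset.mem_insert.1 hv with rfl | hv
      · exact ih (vS' i) (by simp) (by simp [vS, vS'])
      · rcases Finset.mem_singleton.1 hv with rfl
        exact ih (vS i) (by simp) (by simp [vS, vS'])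
    · -- E₂ edge {s_i, s'_i, u_j}
      rcases Finset.mem_insert.1 hv with rfl | hv
      · exact ih (vS' i) (by simp) (by simp [vS, vS'])
      · rcases Finset.mem_insert.1 hv with rfl | hv
        · exact ih (vS i) (by simp) (by simp [vS, vS'])
        · rcases Finset.mem_singleton.1 hv with rfl
          have hs := ih (vS i) (by simp) (by simp [vS, vU])
          rcases hs with h1 | h1 | h1
          · exact Or.inr (Or.inr ⟨i, hiS, hui, Or.inl h1⟩)
          · exact Or.inr (Or.inr ⟨i, hiS, hui, Or.inr h1⟩)
          · exact h1 u (hsub i hiS hui)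
    · -- E₂ edge {s_i, s'_i, u'_j}
      rcases Finset.mem_insert.1 hv with rfl | hv
      · exact ih (vS' i) (by simp) (by simp [vS, vS'])
      · rcases Finset.mem_insert.1 hv with rfl | hv
        · exact ih (vS i) (by simp) (by simp [vS, vS'])
        · rcases Finset.mem_singleton.1 hv with rfl
          have hs := ih (vS i) (by simp) (by simp [vS, vU'])
          rcases hs with h1 | h1 | h1
          · exact Or.inr (Or.inr ⟨i, hiS, hui, Or.inl h1⟩)
          · exact Or.inr (Or.inr ⟨i, hiS, hui, Or.inr h1⟩)
          · exact h1 u (hsub i hiS hui)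
    · -- E₃ edge V₂ ∪ {s_i}
      rcases Finset.mem_insert.1 hv with rfl | hv
      · refine Or.inr (Or.inr fun u hu => ?_)
        exact ih (vU u) (Finset.mem_insert_of_mem (mem_scV2.2 ⟨u, hu, Or.inl rfl⟩))
          (by simp [vS, vU])
      · rcases mem_scV2.1 hv with ⟨u, hu, rfl | rfl⟩
        · exact ih (vU' u) (Finset.mem_insert_of_mem (mem_scV2.2 ⟨u, hu, Or.inr rfl⟩))
            (by simp [vU, vU'])
        · exact ih (vU u) (Finset.mem_insert_of_mem (mem_scV2.2 ⟨u, hu, Or.inl rfl⟩))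
            (by simp [vU, vU'])
    · -- E₃ edge V₂ ∪ {s'_i}
      rcases Finset.mem_insert.1 hv with rfl | hv
      · refine Or.inr (Or.inr fun u hu => ?_)
        exact ih (vU u) (Finset.mem_insert_of_mem (mem_scV2.2 ⟨u, hu, Or.inl rfl⟩))
          (by simp [vS', vU])
      · rcases mem_scV2.1 hv with ⟨u, hu, rfl | rfl⟩
        · exact ih (vU' u) (Finset.mem_insert_of_mem (mem_scV2.2 ⟨u, hu, Or.inr rfl⟩))
            (by simp [vU, vU'])
        · exact ih (vU u) (Finset.mem_insert_of_mem (mem_scV2.2 ⟨u, hu, Or.inl rfl⟩))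
            (by simp [vU, vU'])

/-- Easy direction: a set cover yields a core of the same size. -/
lemma cover_isCore (hsub : ∀ i ∈ S, i ⊆ U) {T : Finset (Finset β)} (hTS : T ⊆ S)
    (hTcov : ∀ u ∈ U, ∃ i ∈ T, u ∈ i) :
    IsCore (scV U S) (scE U S) (T.image vS) := by
  set E := scE U S with hE
  set Cc := T.image vS with hCc
  have hsT : ∀ i ∈ T, Assim E Cc (vS i) := fun i hi =>
    Assim.base _ (Finset.mem_image_of_mem _ hi)
  have hsT' : ∀ i ∈ T, Assim E Cc (vS' i) := by
    intro i hi
    refine Assim.step {vS i, vS' i} (vS' i) ?_ (by simp) ?_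
    · exact mem_scE_iff.2 (Or.inl ⟨i, hTS hi, rfl⟩)
    · intro w hwe hne
      rcases Finset.mem_insert.1 hwe with rfl | hw
      · exact hsT i hi
      · exact absurd (Finset.mem_singleton.1 hw) hne
  have hU : ∀ u ∈ U, Assim E Cc (vU u) ∧ Assim E Cc (vU' u) := by
    intro u hu
    obtain ⟨i, hiT, hui⟩ := hTcov u hu
    constructor
    · refine Assim.step {vS i, vS' i, vU u} (vU u) ?_ (by simp) ?_
      · exact mem_scE_iff.2 (Or.inr (Or.inl ⟨i, hTS hiT, u, hui, Or.inl rfl⟩))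
      · intro w hwe hne
        rcases Finset.mem_insert.1 hwe with rfl | hw
        · exact hsT i hiT
        · rcases Finset.mem_insert.1 hw with rfl | hw
          · exact hsT' i hiT
          · exact absurd (Finset.mem_singleton.1 hw) hne
    · refine Assim.step {vS i, vS' i, vU' u} (vU' u) ?_ (by simp) ?_
      · exact mem_scE_iff.2 (Or.inr (Or.inl ⟨i, hTS hiT, u, hui, Or.inr rfl⟩))
      · intro w hwe hne
        rcases Finset.mem_insert.1 hwe with rfl | hw
        · exact hsT i hiT
        · rcases Finset.mem_insert.1 hw with rfl | hw
          · exact hsT' i hiT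
          · exact absurd (Finset.mem_singleton.1 hw) hne
  have hV2 : ∀ v ∈ scV2 U, Assim E Cc v := by
    intro v hv
    rcases mem_scV2.1 hv with ⟨u, hu, rfl | rfl⟩
    · exact (hU u hu).1
    · exact (hU u hu).2
  have hsS : ∀ i ∈ S, Assim E Cc (vS i) := by
    intro i hi
    refine Assim.step (insert (vS i) (scV2 U)) (vS i) ?_ (Finset.mem_insert_self _ _) ?_
    · exact mem_scE_iff.2 (Or.inr (Or.inr ⟨i, hi, Or.inl rfl⟩))
    · intro w hwe hne
      rcases Finset.mem_insert.1 hwe with rfl | hw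
      · exact absurd rfl hne
      · exact hV2 w hw
  have hsS' : ∀ i ∈ S, Assim E Cc (vS' i) := by
    intro i hi
    refine Assim.step (insert (vS' i) (scV2 U)) (vS' i) ?_ (Finset.mem_insert_self _ _) ?_
    · exact mem_scE_iff.2 (Or.inr (Or.inr ⟨i, hi, Or.inr rfl⟩))
    · intro w hwe hne
      rcases Finset.mem_insert.1 hwe with rfl | hw
      · exact absurd rfl hne
      · exact hV2 w hw
  constructor
  · intro v hv
    obtain ⟨i, hi, rfl⟩ := Finset.mem_image.1 hv
    exact Finset.mem_union_left _ (Finset.mem_union_left _ (Finset.mem_image_of_mem _ (hTS hi)))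
  · intro e he v hv
    rcases mem_scE_iff.1 he with ⟨i, hiS, rfl⟩ | ⟨i, hiS, u, hui, rfl | rfl⟩ |
        ⟨i, hiS, rfl | rfl⟩
    · rcases Finset.mem_insert.1 hv with rfl | hv
      · exact hsS i hiS
      · rcases Finset.mem_singleton.1 hv with rfl
        exact hsS' i hiS
    · rcases Finset.mem_insert.1 hv with rfl | hv
      · exact hsS i hiS
      · rcases Finset.mem_insert.1 hv with rfl | hv
        · exact hsS' i hiS
        · rcases Finset.mem_singleton.1 hv with rfl
          exact (hU u (hsub i hiS hui)).1
    · rcases Finset.mem_insert.1 hv with rfl | hv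
      · exact hsS i hiS
      · rcases Finset.mem_insert.1 hv with rfl | hv
        · exact hsS' i hiS
        · rcases Finset.mem_singleton.1 hv with rfl
          exact (hU u (hsub i hiS hui)).2
    · rcases Finset.mem_insert.1 hv with rfl | hv
      · exact hsS i hiS
      · exact hV2 v hv
    · rcases Finset.mem_insert.1 hv with rfl | hv
      · exact hsS' i hiS
      · exact hV2 v hv

/-- Hard direction: a core yields a set cover of at most the same size. -/
lemma core_to_cover (hsub : ∀ i ∈ S, i ⊆ U) (hcov : ∀ u ∈ U, ∃ i ∈ S, u ∈ i)
    (hC : IsCore (scV U S) (scE U S) C) :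
    ∃ T ⊆ S, (∀ u ∈ U, ∃ i ∈ T, u ∈ i) ∧ T.card ≤ C.card := by
  classical
  refine ⟨C.image (vertToSet S), ?_, ?_, Finset.card_image_le⟩
  · intro j hj
    obtain ⟨c, hc, rfl⟩ := Finset.mem_image.1 hj
    have hcV := hC.1 hc
    rcases c with (i | i) | (u | u)
    · -- vertToSet S (vS i) = i, and i ∈ S from membership in scV
      have : vS i ∈ scV1 S := by
        rcases Finset.mem_union.1 hcV with h | h
        · exact h
        · exact absurd (mem_scV2.1 h) (by simp [vU, vU', vS])
      rcases Finset.mem_union.1 this with h | h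
      · obtain ⟨j, hj, hje⟩ := Finset.mem_image.1 h
        simp only [vS, Sum.inl.injEq] at hje
        simpa [vertToSet, hje] using hj
      · obtain ⟨j, hj, hje⟩ := Finset.mem_image.1 h
        simp [vS', vS] at hje
    · have : vS' i ∈ scV1 S := by
        rcases Finset.mem_union.1 hcV with h | h
        · exact h
        · exact absurd (mem_scV2.1 h) (by simp [vU, vU', vS'])
      rcases Finset.mem_union.1 this with h | h
      · obtain ⟨j, hj, hje⟩ := Finset.mem_image.1 h
        simp [vS', vS] at hje
      · obtain ⟨j, hj, hje⟩ := Finset.mem_image.1 h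
        simp only [vS', Sum.inl.injEq, Sum.inr.injEq] at hje
        simpa [vertToSet, hje] using hj
    · have hu : u ∈ U := by
        rcases Finset.mem_union.1 hcV with h | h
        · exact absurd h (by simp [scV1, vS, vS', vU])
        · rcases mem_scV2.1 h with ⟨u', hu', he⟩
          rcases he with he | he
          · simp only [vU, Sum.inr.injEq, Sum.inl.injEq] at he; exact he ▸ hu'
          · simp [vU, vU'] at he
      have hex : ∃ i ∈ S, u ∈ i := hcov u hu
      simp only [vertToSet, vU, vU', dif_pos hex]
      exact hex.choose_spec.1
    · have hu : u ∈ U := by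
        rcases Finset.mem_union.1 hcV with h | h
        · exact absurd h (by simp [scV1, vS, vS', vU'])
        · rcases mem_scV2.1 h with ⟨u', hu', he⟩
          rcases he with he | he
          · simp [vU, vU'] at he
          · simp only [vU', Sum.inr.injEq] at he; exact he ▸ hu'
      have hex : ∃ i ∈ S, u ∈ i := hcov u hu
      simp only [vertToSet, vU, vU', dif_pos hex]
      exact hex.choose_spec.1
  · intro u hu
    obtain ⟨i, hiS, hui⟩ := hcov u hu
    have hassim : Assim (scE U S) C (vU u) := by
      refine hC.2 {vS i, vS' i, vU u} ?_ (vU u) (by simp)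
      exact mem_scE_iff.2 (Or.inr (Or.inl ⟨i, hiS, u, hui, Or.inl rfl⟩))
    have hgood : Good S C u := assim_invariant hsub hassim
    have hex : ∃ i ∈ S, u ∈ i := hcov u hu
    rcases hgood with h | h | ⟨j, hjS, huj, hj⟩
    · refine ⟨hex.choose, Finset.mem_image.2 ⟨vU u, h, ?_⟩, hex.choose_spec.2⟩
      simp [vertToSet, vU, vU', dif_pos hex]
    · refine ⟨hex.choose, Finset.mem_image.2 ⟨vU' u, h, ?_⟩, hex.choose_spec.2⟩
      simp [vertToSet, vU, vU', dif_pos hex]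
    · rcases hj with hj | hj
      · exact ⟨j, Finset.mem_image.2 ⟨vS j, hj, rfl⟩, huj⟩
      · exact ⟨j, Finset.mem_image.2 ⟨vS' j, hj, rfl⟩, huj⟩

lemma vS_mem_scV {i : Finset β} (hi : i ∈ S) : vS i ∈ scV U S :=
  Finset.mem_union_left _ (Finset.mem_union_left _ (Finset.mem_image_of_mem _ hi))

lemma vS'_mem_scV {i : Finset β} (hi : i ∈ S) : vS' i ∈ scV U S :=
  Finset.mem_union_left _ (Finset.mem_union_right _ (Finset.mem_image_of_mem _ hi))

lemma vU_mem_scV {u : β} (hu : u ∈ U) : vU u ∈ scV U S :=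
  Finset.mem_union_right _ (Finset.mem_union_left _ (Finset.mem_image_of_mem _ hu))

lemma vU'_mem_scV {u : β} (hu : u ∈ U) : vU' u ∈ scV U S :=
  Finset.mem_union_right _ (Finset.mem_union_right _ (Finset.mem_image_of_mem _ hu))

/-- The whole vertex set is a core. -/
lemma scV_isCore (hsub : ∀ i ∈ S, i ⊆ U) : IsCore (scV U S) (scE U S) (scV U S) := by
  refine ⟨subset_rfl, fun e he v hv => Assim.base _ ?_⟩
  have hV2 : ∀ w ∈ scV2 U, w ∈ scV U S := fun w hw => Finset.mem_union_right _ hw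
  rcases mem_scE_iff.1 he with ⟨i, hiS, rfl⟩ | ⟨i, hiS, u, hui, rfl | rfl⟩ |
      ⟨i, hiS, rfl | rfl⟩
  · rcases Finset.mem_insert.1 hv with rfl | hv
    · exact vS_mem_scV hiS
    · rcases Finset.mem_singleton.1 hv with rfl
      exact vS'_mem_scV hiS
  · rcases Finset.mem_insert.1 hv with rfl | hv
    · exact vS_mem_scV hiS
    · rcases Finset.mem_insert.1 hv with rfl | hv
      · exact vS'_mem_scV hiS
      · rcases Finset.mem_singleton.1 hv with rfl
        exact vU_mem_scV (hsub i hiS hui)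
  · rcases Finset.mem_insert.1 hv with rfl | hv
    · exact vS_mem_scV hiS
    · rcases Finset.mem_insert.1 hv with rfl | hv
      · exact vS'_mem_scV hiS
      · rcases Finset.mem_singleton.1 hv with rfl
        exact vU'_mem_scV (hsub i hiS hui)
  · rcases Finset.mem_insert.1 hv with rfl | hv
    · exact vS_mem_scV hiS
    · exact hV2 v hv
  · rcases Finset.mem_insert.1 hv with rfl | hv
    · exact vS'_mem_scV hiS
    · exact hV2 v hv

/-- Theorem 4: for a Set Cover instance `(U, S)`, the minimum core
size of the constructed hypergraph `H` equals the minimum cardinality of a set cover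
of `(U, S)`. -/
theorem setCover_minCoreSize (U : Finset β) (S : Finset (Finset β))
    (hsub : ∀ i ∈ S, i ⊆ U) (hcov : ∀ u ∈ U, ∃ i ∈ S, u ∈ i) :
    minCoreSize (scV U S) (scE U S) =
      sInf {k | ∃ T ⊆ S, (∀ u ∈ U, ∃ i ∈ T, u ∈ i) ∧ T.card = k} := by
  have hvSinj : Function.Injective (vS : Finset β → SCVert β) := by
    intro a b hab
    simpa [vS] using hab
  have hcoreNE : {k | ∃ C, IsCore (scV U S) (scE U S) C ∧ C.card = k}.Nonempty :=
    ⟨(scV U S).card, scV U S, scV_isCore hsub, rfl⟩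
  have hcovNE : {k | ∃ T ⊆ S, (∀ u ∈ U, ∃ i ∈ T, u ∈ i) ∧ T.card = k}.Nonempty :=
    ⟨S.card, S, subset_rfl, hcov, rfl⟩
  apply le_antisymm
  · -- minCoreSize ≤ min cover size
    obtain ⟨T, hTS, hTcov, hTcard⟩ := Nat.sInf_mem hcovNE
    have hcore := cover_isCore hsub hTS hTcov
    have : minCoreSize (scV U S) (scE U S) ≤ (T.image vS).card :=
      Nat.sInf_le ⟨T.image vS, hcore, rfl⟩
    rwa [Finset.card_image_of_injective _ hvSinj, hTcard] at this
  · -- min cover size ≤ minCoreSize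
    obtain ⟨Cc, hCc, hCcard⟩ := Nat.sInf_mem hcoreNE
    obtain ⟨T, hTS, hTcov, hTle⟩ := core_to_cover hsub hcov hCc
    calc sInf {k | ∃ T ⊆ S, (∀ u ∈ U, ∃ i ∈ T, u ∈ i) ∧ T.card = k}
        ≤ T.card := Nat.sInf_le ⟨T, hTS, hTcov, rfl⟩
      _ ≤ Cc.card := hTle
      _ = _ := hCcard

end SetCover
end

section
/- Let Δ(T) be a triangulation gadget with root r and leaves v_1, …, v_m. Then every subset C ⊆ {r, v_1, …, v_m} with |C| = m (that is, either the set of all m leaves, or the root together with any m − 1 of the leaves) is a core of Δ(T). -/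
variable {α : Type*} [DecidableEq α]

/-- A binary tree with labelled nodes, in which every internal node has exactly
two children. -/
inductive LTree (α : Type*) where
  | leaf (a : α)
  | node (a : α) (l r : LTree α)

namespace LTree

/-- The label of the root of the tree. -/
def root : LTree α → α
  | leaf a => a
  | node a _ _ => a

/-- The set of labels of all nodes of the tree. -/
def verts [DecidableEq α] : LTree α → Finset α
  | leaf a => {a}
  | node a l r => insert a (l.verts ∪ r.verts)

/-- The set of labels of the leaves of the tree. -/
def leaves [DecidableEq α] : LTree α → Finset α
  | leaf a => {a}
  | node _ l r => l.leaves ∪ r.leaves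

/-- The number of nodes of the tree. -/
def size : LTree α → ℕ
  | leaf _ => 1
  | node _ l r => 1 + l.size + r.size

/-- The edges of the triangulation gadget `Δ(T)`: for every internal node `v` with
children `c₁(v), c₂(v)` the 3-element edge `{v, c₁(v), c₂(v)}`. -/
def edges [DecidableEq α] : LTree α → Finset (Finset α)
  | leaf _ => ∅
  | node a l r => insert {a, l.root, r.root} (l.edges ∪ r.edges)

end LTree


namespace LTree
variable {α : Type*} [DecidableEq α]

lemma root_mem_verts (t : LTree α) : t.root ∈ t.verts := by
  cases t <;> simp [root, verts]

lemma leaves_subset_verts (t : LTree α) : t.leaves ⊆ t.verts := by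
  induction t with
  | leaf a => simp [leaves, verts]
  | node a l r ihl ihr =>
    simp only [leaves, verts]
    intro x hx
    rcases Finset.mem_union.mp hx with h | h
    · exact Finset.mem_insert_of_mem (Finset.mem_union_left _ (ihl h))
    · exact Finset.mem_insert_of_mem (Finset.mem_union_right _ (ihr h))

lemma leaves_nonempty (t : LTree α) : t.leaves.Nonempty := by
  induction t with
  | leaf a => simp [leaves]
  | node a l r ihl ihr =>
    exact Finset.Nonempty.mono Finset.subset_union_left ihl

lemma card_verts_le_size (t : LTree α) : t.verts.card ≤ t.size := by
  induction t with
  | leaf a => simp [verts, size]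
  | node a l r ihl ihr =>
    calc (insert a (l.verts ∪ r.verts)).card ≤ (l.verts ∪ r.verts).card + 1 :=
          Finset.card_insert_le _ _
      _ ≤ (l.verts.card + r.verts.card) + 1 := by
          exact Nat.add_le_add_right (Finset.card_union_le _ _) 1
      _ ≤ 1 + l.size + r.size := by omega

/-- All labels pairwise distinct. -/
def Distinct : LTree α → Prop
  | leaf _ => True
  | node a l r => a ∉ l.verts ∧ a ∉ r.verts ∧ Disjoint l.verts r.verts ∧
      Distinct l ∧ Distinct r

lemma distinct_of_card (t : LTree α) (h : t.verts.card = t.size) : t.Distinct := by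
  induction t with
  | leaf a => trivial
  | node a l r ihl ihr =>
    have h1 : (insert a (l.verts ∪ r.verts)).card ≤ (l.verts ∪ r.verts).card + 1 :=
      Finset.card_insert_le _ _
    have h2 : (l.verts ∪ r.verts).card ≤ l.verts.card + r.verts.card :=
      Finset.card_union_le _ _
    have h3 := card_verts_le_size l
    have h4 := card_verts_le_size r
    have hsz : (insert a (l.verts ∪ r.verts)).card = 1 + l.size + r.size := h
    have hl : l.verts.card = l.size := by omega
    have hr : r.verts.card = r.size := by omega
    have hins : (insert a (l.verts ∪ r.verts)).card = (l.verts ∪ r.verts).card + 1 := by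
      omega
    have hun : (l.verts ∪ r.verts).card = l.verts.card + r.verts.card := by omega
    have hnotmem : a ∉ l.verts ∪ r.verts := by
      intro hmem
      rw [Finset.card_insert_of_mem hmem] at hins
      omega
    have hdisj : Disjoint l.verts r.verts := by
      rwa [Finset.card_union_eq_card_add_card] at hun
    exact ⟨fun h' => hnotmem (Finset.mem_union_left _ h'),
           fun h' => hnotmem (Finset.mem_union_right _ h'),
           hdisj, ihl hl, ihr hr⟩

lemma edge_subset_verts (t : LTree α) : ∀ e ∈ t.edges, e ⊆ t.verts := by
  induction t with
  | leaf a => simp [edges]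
  | node a l r ihl ihr =>
    intro e he
    simp only [edges, Finset.mem_insert, Finset.mem_union] at he
    rcases he with rfl | he | he
    · intro v hv
      simp only [Finset.mem_insert, Finset.mem_singleton] at hv
      rcases hv with rfl | rfl | rfl
      · simp [verts]
      · exact Finset.mem_insert_of_mem (Finset.mem_union_left _ (root_mem_verts l))
      · exact Finset.mem_insert_of_mem (Finset.mem_union_right _ (root_mem_verts r))
    · exact fun v hv => Finset.mem_insert_of_mem (Finset.mem_union_left _ (ihl e he hv))
    · exact fun v hv => Finset.mem_insert_of_mem (Finset.mem_union_right _ (ihr e he hv))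

end LTree

section Main
variable {α : Type*} [DecidableEq α]

lemma assim_all (E : Finset (Finset α)) (S : Finset α) (t : LTree α)
    (hE : t.edges ⊆ E) (hleaf : ∀ v ∈ t.leaves, Assim E S v) :
    ∀ v ∈ t.verts, Assim E S v := by
  induction t with
  | leaf a =>
    intro v hv
    simp only [LTree.verts, Finset.mem_singleton] at hv
    subst hv
    exact hleaf v (by simp [LTree.leaves])
  | node a l r ihl ihr =>
    have hEl : l.edges ⊆ E := fun e he =>
      hE (by simp only [LTree.edges, Finset.mem_insert, Finset.mem_union]; tauto)
    have hEr : r.edges ⊆ E := fun e he =>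
      hE (by simp only [LTree.edges, Finset.mem_insert, Finset.mem_union]; tauto)
    have hl := ihl hEl (fun v hv => hleaf v (by
      simp only [LTree.leaves, Finset.mem_union]; exact Or.inl hv))
    have hr := ihr hEr (fun v hv => hleaf v (by
      simp only [LTree.leaves, Finset.mem_union]; exact Or.inr hv))
    have hedge : ({a, l.root, r.root} : Finset α) ∈ E :=
      hE (by simp [LTree.edges])
    intro v hv
    simp only [LTree.verts, Finset.mem_insert, Finset.mem_union] at hv
    rcases hv with rfl | hv | hv
    · refine Assim.step {v, l.root, r.root} v hedge (by simp) ?_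
      intro w hw hwv
      simp only [Finset.mem_insert, Finset.mem_singleton] at hw
      rcases hw with rfl | rfl | rfl
      · exact absurd rfl hwv
      · exact hl _ (LTree.root_mem_verts l)
      · exact hr _ (LTree.root_mem_verts r)
    · exact hl v hv
    · exact hr v hv

lemma assim_from_root (E : Finset (Finset α)) (S : Finset α) (x : α) (t : LTree α)
    (hd : t.Distinct) (hE : t.edges ⊆ E) (hroot : Assim E S t.root)
    (hleaf : ∀ v ∈ t.leaves, v ≠ x → Assim E S v) :
    ∀ v ∈ t.verts, Assim E S v := by
  induction t with
  | leaf a =>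
    intro v hv
    simp only [LTree.verts, Finset.mem_singleton] at hv
    subst hv
    exact hroot
  | node a l r ihl ihr =>
    obtain ⟨hal, har, hdisj, hdl, hdr⟩ := hd
    have hEl : l.edges ⊆ E := fun e he =>
      hE (by simp only [LTree.edges, Finset.mem_insert, Finset.mem_union]; tauto)
    have hEr : r.edges ⊆ E := fun e he =>
      hE (by simp only [LTree.edges, Finset.mem_insert, Finset.mem_union]; tauto)
    have hedge : ({a, l.root, r.root} : Finset α) ∈ E := hE (by simp [LTree.edges])
    have hra : Assim E S a := hroot
    by_cases hxr : x ∈ r.leaves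
    · -- missing leaf is on the right; left subtree has all leaves
      have hxl : x ∉ l.leaves := fun h =>
        Finset.disjoint_left.mp hdisj (l.leaves_subset_verts h) (r.leaves_subset_verts hxr)
      have hlall : ∀ v ∈ l.verts, Assim E S v :=
        assim_all E S l hEl (fun v hv => hleaf v (by
          simp only [LTree.leaves, Finset.mem_union]; exact Or.inl hv)
          (fun h => hxl (h ▸ hv)))
      have hrr : Assim E S r.root := by
        refine Assim.step {a, l.root, r.root} r.root hedge (by simp) ?_
        intro w hw hwv
        simp only [Finset.mem_insert, Finset.mem_singleton] at hw
        rcases hw with rfl | rfl | rfl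
        · exact hra
        · exact hlall _ (LTree.root_mem_verts l)
        · exact absurd rfl hwv
      have hrall := ihr hdr hEr hrr (fun v hv hvx => hleaf v (by
        simp only [LTree.leaves, Finset.mem_union]; exact Or.inr hv) hvx)
      intro v hv
      simp only [LTree.verts, Finset.mem_insert, Finset.mem_union] at hv
      rcases hv with rfl | hv | hv
      · exact hra
      · exact hlall v hv
      · exact hrall v hv
    · -- right subtree has all leaves
      have hrall : ∀ v ∈ r.verts, Assim E S v :=
        assim_all E S r hEr (fun v hv => hleaf v (by
          simp only [LTree.leaves, Finset.mem_union]; exact Or.inr hv)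
          (fun h => hxr (h ▸ hv)))
      have hlr : Assim E S l.root := by
        refine Assim.step {a, l.root, r.root} l.root hedge (by simp) ?_
        intro w hw hwv
        simp only [Finset.mem_insert, Finset.mem_singleton] at hw
        rcases hw with rfl | rfl | rfl
        · exact hra
        · exact absurd rfl hwv
        · exact hrall _ (LTree.root_mem_verts r)
      have hlall := ihl hdl hEl hlr (fun v hv hvx => hleaf v (by
        simp only [LTree.leaves, Finset.mem_union]; exact Or.inl hv) hvx)
      intro v hv
      simp only [LTree.verts, Finset.mem_insert, Finset.mem_union] at hv
      rcases hv with rfl | hv | hv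
      · exact hra
      · exact hlall v hv
      · exact hrall v hv

end Main

/-- Lemma 4: let `Δ(T)` be a triangulation gadget (on a tree `T`
whose node labels are pairwise distinct, i.e. `|verts T| = size T`) with root `r` and
leaves `v_1, …, v_m`. Every `C ⊆ {r, v_1, …, v_m}` with `|C| = m` is a core of `Δ(T)`. -/
theorem triangulation_gadget_core (t : LTree α) (hproper : t.verts.card = t.size)
    (C : Finset α) (hsub : C ⊆ insert t.root t.leaves) (hcard : C.card = t.leaves.card) :
    IsCore t.verts t.edges C := by
  have hCV : C ⊆ t.verts := by
    intro v hv
    rcases Finset.mem_insert.mp (hsub hv) with rfl | h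
    · exact t.root_mem_verts
    · exact t.leaves_subset_verts h
  refine ⟨hCV, ?_⟩
  have hall : ∀ v ∈ t.verts, Assim t.edges C v := by
    by_cases hroot : t.root ∈ C
    · -- at most one leaf missing from C
      have hsub' : C.erase t.root ⊆ t.leaves := by
        intro v hv
        rcases Finset.mem_insert.mp (hsub (Finset.mem_of_mem_erase hv)) with rfl | h
        · exact absurd rfl (Finset.ne_of_mem_erase hv)
        · exact h
      have hcarde : (C.erase t.root).card = t.leaves.card - 1 := by
        rw [Finset.card_erase_of_mem hroot, hcard]
      have hm : 1 ≤ t.leaves.card := Finset.card_pos.mpr t.leaves_nonempty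
      have hsd : (t.leaves \ C).card ≤ 1 := by
        have h1 : t.leaves \ C ⊆ t.leaves \ C.erase t.root :=
          Finset.sdiff_subset_sdiff (le_refl _) (Finset.erase_subset _ _)
        have h2 : (t.leaves \ C.erase t.root).card = t.leaves.card - (C.erase t.root).card :=
          Finset.card_sdiff_of_subset hsub'
        have h3 := Finset.card_le_card h1
        omega
      have : Nonempty α := ⟨t.root⟩
      obtain ⟨x, hx⟩ := Finset.card_le_one_iff_subset_singleton.mp hsd
      exact assim_from_root t.edges C x t (LTree.distinct_of_card t hproper)
        (le_refl _) (Assim.base _ hroot)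
        (fun v hv hvx => Assim.base _ (by
          by_contra hvc
          exact hvx (Finset.mem_singleton.mp (hx (Finset.mem_sdiff.mpr ⟨hv, hvc⟩)))))
    · -- C = leaves
      have hCl : C ⊆ t.leaves := by
        intro v hv
        rcases Finset.mem_insert.mp (hsub hv) with rfl | h
        · exact absurd hv hroot
        · exact h
      have hCeq : C = t.leaves := Finset.eq_of_subset_of_card_le hCl (le_of_eq hcard.symm)
      exact assim_all t.edges C t (le_refl _)
        (fun v hv => Assim.base _ (hCeq ▸ hv))
  exact fun e he v hv => hall v (t.edge_subset_verts e he hv)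
end

section
/- Let G = (V, E) be a hypergraph containing an AND-gadget AND(U, v) as a subgraph, such that the inner nodes x_1, x_2 of the gadget occur only in edges of the gadget. Then G has a minimum core C with C ⊆ V \ {x_1, x_2}. -/
variable {α : Type*} [DecidableEq α]

/-- Iterative assimilation closure. -/
def AIter (E : Finset (Finset α)) (C : Finset α) : ℕ → Finset α
  | 0 => C
  | n + 1 => AIter E C n ∪
      (E.filter fun e => (e \ AIter E C n).card ≤ 1).biUnion id

lemma AIter_mono (E : Finset (Finset α)) (C : Finset α) {m n : ℕ} (h : m ≤ n) :
    AIter E C m ⊆ AIter E C n := by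
  induction n with
  | zero => simpa [Nat.le_zero.mp h] using Finset.Subset.refl _
  | succ n ih =>
    rcases Nat.lt_or_ge m (n+1) with h' | h'
    · exact (ih (Nat.lt_succ_iff.mp h')).trans Finset.subset_union_left
    · have : m = n + 1 := le_antisymm h h'
      subst this; exact Finset.Subset.refl _

lemma mem_AIter_succ {E : Finset (Finset α)} {C : Finset α} {n : ℕ} {w : α}
    (h : w ∈ AIter E C (n+1)) :
    w ∈ AIter E C n ∨ ∃ e ∈ E, w ∈ e ∧ ∀ w' ∈ e, w' ≠ w → w' ∈ AIter E C n := by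
  rcases Finset.mem_union.mp h with h | h
  · exact Or.inl h
  · rcases Finset.mem_biUnion.mp h with ⟨e, he, hwe⟩
    rcases Finset.mem_filter.mp he with ⟨heE, hcard⟩
    by_cases hwA : w ∈ AIter E C n
    · exact Or.inl hwA
    · refine Or.inr ⟨e, heE, hwe, ?_⟩
      intro w' hw' hne
      by_contra hw'A
      have hsub : ({w, w'} : Finset α) ⊆ e \ AIter E C n := by
        intro z hz
        rcases Finset.mem_insert.mp hz with rfl | hz
        · exact Finset.mem_sdiff.mpr ⟨hwe, hwA⟩
        · rw [Finset.mem_singleton.mp hz]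
          exact Finset.mem_sdiff.mpr ⟨hw', hw'A⟩
      have h2 : 2 ≤ (e \ AIter E C n).card := by
        have := Finset.card_le_card hsub
        rwa [Finset.card_pair (fun h => hne h.symm)] at this
      omega

lemma assim_to_AIter {E : Finset (Finset α)} {C : Finset α} {w : α}
    (h : Assim E C w) : ∃ n, w ∈ AIter E C n := by
  induction h with
  | base v hv => exact ⟨0, hv⟩
  | step e v heE hve hprem ih =>
    classical
    set N := e.sup (fun w => sInf {n | w ∈ AIter E C n}) with hN
    have hsub : ∀ w' ∈ e, w' ≠ v → w' ∈ AIter E C N := by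
      intro w' hw' hne
      obtain ⟨n, hn⟩ := ih w' hw' hne
      have h1 : sInf {n | w' ∈ AIter E C n} ∈ {n | w' ∈ AIter E C n} :=
        Nat.sInf_mem ⟨n, hn⟩
      exact AIter_mono E C (Finset.le_sup hw') h1
    refine ⟨N + 1, ?_⟩
    apply Finset.mem_union_right
    apply Finset.mem_biUnion.mpr
    refine ⟨e, Finset.mem_filter.mpr ⟨heE, ?_⟩, hve⟩
    have : e \ AIter E C N ⊆ {v} := by
      intro z hz
      rcases Finset.mem_sdiff.mp hz with ⟨hze, hzA⟩
      by_contra hzv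
      exact hzA (hsub z hze (by simpa using hzv))
    calc (e \ AIter E C N).card ≤ ({v} : Finset α).card := Finset.card_le_card this
      _ = 1 := Finset.card_singleton v

lemma AIter_to_assim {E : Finset (Finset α)} {C : Finset α} (n : ℕ) :
    ∀ w ∈ AIter E C n, Assim E C w := by
  induction n with
  | zero => exact fun w hw => .base w hw
  | succ n ih =>
    intro w hw
    rcases mem_AIter_succ hw with h | ⟨e, heE, hwe, hp⟩
    · exact ih w h
    · exact .step e w heE hwe fun w' h1 h2 => ih w' (hp w' h1 h2)

lemma claim_avoid (E : Finset (Finset α)) (U : Finset α) (v x₁ x₂ : α)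
    (hx₁v : x₁ ≠ v) (hx₂v : x₂ ≠ v) (hx₁U : x₁ ∉ U) (hx₂U : x₂ ∉ U)
    (he₁ : insert x₁ U ∈ E) (he₂ : insert x₂ U ∈ E)
    (he₃ : ({x₁, x₂, v} : Finset α) ∈ E)
    (honly₁ : ∀ e ∈ E, x₁ ∈ e → e = insert x₁ U ∨ e = {x₁, x₂, v})
    (honly₂ : ∀ e ∈ E, x₂ ∈ e → e = insert x₂ U ∨ e = {x₁, x₂, v})
    (C C'' : Finset α)
    (hD : C \ {x₁, x₂} ⊆ C'')
    (Hstar : ∀ m (w : α), w ∈ U → w ∉ C → w ∉ AIter E C m →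
        (∀ w' ∈ U, w' ≠ w → w' ∈ AIter E C m) → w ∈ C'')
    (Hv : v ∈ C'' ∨ x₁ ∉ C ∨ x₂ ∉ C ∨ U ⊆ C'') :
    ∀ n, ∀ w ∈ AIter E C n, w ≠ x₁ → w ≠ x₂ → Assim E C'' w := by
  have stepU : (∀ u ∈ U, Assim E C'' u) → Assim E C'' v := by
    intro hU
    have a1 : Assim E C'' x₁ := .step _ x₁ he₁ (Finset.mem_insert_self _ _)
      (fun w' hw' hne => hU w' ((Finset.mem_insert.mp hw').resolve_left hne))
    have a2 : Assim E C'' x₂ := .step _ x₂ he₂ (Finset.mem_insert_self _ _)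
      (fun w' hw' hne => hU w' ((Finset.mem_insert.mp hw').resolve_left hne))
    refine .step _ v he₃ (by simp) ?_
    intro w' hw' hne
    rcases Finset.mem_insert.mp hw' with rfl | hw'
    · exact a1
    rcases Finset.mem_insert.mp hw' with rfl | hw'
    · exact a2
    · exact absurd (Finset.mem_singleton.mp hw') hne
  intro n
  induction n using Nat.strong_induction_on with
  | _ n IH =>
    match n with
    | 0 =>
      intro w hw hw1 hw2
      exact .base w (hD (Finset.mem_sdiff.mpr ⟨hw, by simp [hw1, hw2]⟩))
    | m + 1 =>
      intro w hw hw1 hw2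
      -- helper for the gadget-edge case assimilating v
      have key : ∀ y : α, y ≠ v → y ∉ U → y ∉ C →
          (∀ e ∈ E, y ∈ e → e = insert y U ∨ e = {x₁, x₂, v}) →
          y ∈ AIter E C m → Assim E C'' v := by
        intro y hyv hyU hyC hyonly hym
        have hsle : sInf {k | y ∈ AIter E C k} ≤ m := Nat.sInf_le hym
        have hyt : sInf {k | y ∈ AIter E C k} ∈ {k | y ∈ AIter E C k} :=
          Nat.sInf_mem ⟨m, hym⟩
        have ht0 : sInf {k | y ∈ AIter E C k} ≠ 0 := by
          intro h
          rw [h] at hyt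
          exact hyC hyt
        obtain ⟨s, hs⟩ := Nat.exists_eq_succ_of_ne_zero ht0
        have hys : y ∉ AIter E C s := by
          intro h
          have := Nat.sInf_le (show s ∈ {k | y ∈ AIter E C k} from h)
          omega
        have hyt2 : y ∈ AIter E C (sInf {k | y ∈ AIter E C k}) := hyt
        have hyt' : y ∈ AIter E C (s + 1) := by
          rw [← Nat.succ_eq_add_one, ← hs]
          exact hyt2
        rcases mem_AIter_succ hyt' with h | ⟨e', he'E, hye', hprem'⟩
        · exact absurd h hys
        · rcases hyonly e' he'E hye' with rfl | rfl
          · -- e' = insert y U : all of U is assimilated at stage s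
            have hsm : s < m + 1 := by omega
            have hU' : ∀ u ∈ U, Assim E C'' u := by
              intro u hu
              refine IH s hsm u
                (hprem' u (Finset.mem_insert_of_mem hu) (fun h => hyU (h ▸ hu)))
                (fun h => hx₁U (h ▸ hu)) (fun h => hx₂U (h ▸ hu))
            exact stepU hU'
          · -- e' = {x₁, x₂, v} : v was assimilated at stage s
            have hv' : v ∈ AIter E C s := by
              refine hprem' v (by simp) (fun h => hyv h.symm)
            exact IH s (by omega) v hv' (Ne.symm hx₁v) (Ne.symm hx₂v)
      rcases mem_AIter_succ hw with h | ⟨e, heE, hwe, hprem⟩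
      · exact IH m (Nat.lt_succ_self m) w h hw1 hw2
      · by_cases hx1e : x₁ ∈ e
        · rcases honly₁ e heE hx1e with rfl | rfl
          · -- e = insert x₁ U, w ∈ U
            have hwU : w ∈ U := (Finset.mem_insert.mp hwe).resolve_left hw1
            by_cases hwA : w ∈ AIter E C m
            · exact IH m (Nat.lt_succ_self m) w hwA hw1 hw2
            · by_cases hwC : w ∈ C
              · exact .base w (hD (Finset.mem_sdiff.mpr ⟨hwC, by simp [hw1, hw2]⟩))
              · refine .base w (Hstar m w hwU hwC hwA ?_)
                intro w' hw' hne
                exact hprem w' (Finset.mem_insert_of_mem hw') hne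
          · -- e = {x₁, x₂, v}, so w = v
            have hwv : w = v := by
              rcases Finset.mem_insert.mp hwe with h | h
              · exact absurd h hw1
              rcases Finset.mem_insert.mp h with h | h
              · exact absurd h hw2
              · exact Finset.mem_singleton.mp h
            subst hwv
            rcases Hv with hv | h1C | h2C | hUC
            · exact .base w hv
            · exact key x₁ hx₁v hx₁U h1C honly₁
                (hprem x₁ (by simp) hx₁v)
            · exact key x₂ hx₂v hx₂U h2C honly₂
                (hprem x₂ (by simp) hx₂v)
            · exact stepU (fun u hu => .base u (hUC hu))
        · by_cases hx2e : x₂ ∈ e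
          · have he' : e = insert x₂ U := by
              rcases honly₂ e heE hx2e with h | h
              · exact h
              · exact absurd (h ▸ (by simp : x₁ ∈ ({x₁, x₂, v} : Finset α))) (h ▸ hx1e)
            subst he'
            have hwU : w ∈ U := (Finset.mem_insert.mp hwe).resolve_left hw2
            by_cases hwA : w ∈ AIter E C m
            · exact IH m (Nat.lt_succ_self m) w hwA hw1 hw2
            · by_cases hwC : w ∈ C
              · exact .base w (hD (Finset.mem_sdiff.mpr ⟨hwC, by simp [hw1, hw2]⟩))
              · refine .base w (Hstar m w hwU hwC hwA ?_)
                intro w' hw' hne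
                exact hprem w' (Finset.mem_insert_of_mem hw') hne
          · -- generic edge: contains neither x₁ nor x₂
            refine .step e w heE hwe ?_
            intro w' hw' hne
            exact IH m (Nat.lt_succ_self m) w' (hprem w' hw' hne)
              (fun h => hx1e (h ▸ hw')) (fun h => hx2e (h ▸ hw'))

lemma replace_core (V : Finset α) (E : Finset (Finset α)) (hE : ∀ e ∈ E, e ⊆ V)
    (U : Finset α) (v x₁ x₂ : α)
    (hx₁₂ : x₁ ≠ x₂) (hx₁v : x₁ ≠ v) (hx₂v : x₂ ≠ v)
    (hx₁U : x₁ ∉ U) (hx₂U : x₂ ∉ U)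
    (he₁ : insert x₁ U ∈ E) (he₂ : insert x₂ U ∈ E)
    (he₃ : ({x₁, x₂, v} : Finset α) ∈ E)
    (honly₁ : ∀ e ∈ E, x₁ ∈ e → e = insert x₁ U ∨ e = {x₁, x₂, v})
    (honly₂ : ∀ e ∈ E, x₂ ∈ e → e = insert x₂ U ∨ e = {x₁, x₂, v})
    (C : Finset α) (hC : IsCore V E C) :
    ∃ C'', IsCore V E C'' ∧ C''.card ≤ C.card ∧ x₁ ∉ C'' ∧ x₂ ∉ C'' := by
  classical
  -- from the avoidance claim, build a core
  have wrap : ∀ C'' : Finset α, C'' ⊆ V →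
      (∀ n, ∀ w ∈ AIter E C n, w ≠ x₁ → w ≠ x₂ → Assim E C'' w) → IsCore V E C'' := by
    intro C'' hsub hcl
    refine ⟨hsub, ?_⟩
    have hU : ∀ u ∈ U, Assim E C'' u := by
      intro u hu
      obtain ⟨n, hn⟩ := assim_to_AIter (hC.2 _ he₁ u (Finset.mem_insert_of_mem hu))
      exact hcl n u hn (fun h => hx₁U (h ▸ hu)) (fun h => hx₂U (h ▸ hu))
    have a1 : Assim E C'' x₁ := .step _ x₁ he₁ (Finset.mem_insert_self _ _)
      (fun w' hw' hne => hU w' ((Finset.mem_insert.mp hw').resolve_left hne))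
    have a2 : Assim E C'' x₂ := .step _ x₂ he₂ (Finset.mem_insert_self _ _)
      (fun w' hw' hne => hU w' ((Finset.mem_insert.mp hw').resolve_left hne))
    intro e he w hw
    obtain ⟨n, hn⟩ := assim_to_AIter (hC.2 e he w hw)
    by_cases h1 : w = x₁
    · exact h1 ▸ a1
    by_cases h2 : w = x₂
    · exact h2 ▸ a2
    exact hcl n w hn h1 h2
  by_cases hout : x₁ ∉ C ∧ x₂ ∉ C
  · exact ⟨C, hC, le_refl _, hout.1, hout.2⟩
  by_cases hUC : ∀ u ∈ U, u ∈ C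
  · -- U ⊆ C : take C \ {x₁, x₂}
    refine ⟨C \ {x₁, x₂}, ?_, Finset.card_le_card (Finset.sdiff_subset), by simp, by simp⟩
    refine wrap _ ((Finset.sdiff_subset).trans hC.1) ?_
    refine claim_avoid E U v x₁ x₂ hx₁v hx₂v hx₁U hx₂U he₁ he₂ he₃ honly₁ honly₂ C _
      (Finset.Subset.refl _) ?_ ?_
    · intro m w hwU hwC _ _
      exact absurd (hUC w hwU) hwC
    · refine Or.inr (Or.inr (Or.inr ?_))
      intro u hu
      refine Finset.mem_sdiff.mpr ⟨hUC u hu, ?_⟩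
      simp only [Finset.mem_insert, Finset.mem_singleton]
      push_neg
      exact ⟨fun h => hx₁U (h ▸ hu), fun h => hx₂U (h ▸ hu)⟩
  · -- some u ∈ U \ C exists: pick the last assimilated one
    push_neg at hUC
    obtain ⟨u₀, hu₀U, hu₀C⟩ := hUC
    have hasm : ∀ u ∈ U, ∃ n, u ∈ AIter E C n := fun u hu =>
      assim_to_AIter (hC.2 _ he₁ u (Finset.mem_insert_of_mem hu))
    obtain ⟨us, husmem, husmax⟩ := Finset.exists_max_image (U \ C)
      (fun u => sInf {n | u ∈ AIter E C n}) ⟨u₀, Finset.mem_sdiff.mpr ⟨hu₀U, hu₀C⟩⟩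
    obtain ⟨husU, husC⟩ := Finset.mem_sdiff.mp husmem
    have husV : us ∈ V := hE _ he₁ (Finset.mem_insert_of_mem husU)
    have hvV : v ∈ V := hE _ he₃ (by simp)
    have Hstar : ∀ (C'' : Finset α), us ∈ C'' → ∀ m (w : α), w ∈ U → w ∉ C →
        w ∉ AIter E C m → (∀ w' ∈ U, w' ≠ w → w' ∈ AIter E C m) → w ∈ C'' := by
      intro C'' hus m w hwU hwC hwA hall
      by_cases hwu : w = us
      · exact hwu ▸ hus
      · exfalso
        have h1 : us ∈ AIter E C m := hall us husU (fun h => hwu h.symm)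
        have h2 : sInf {n | us ∈ AIter E C n} ≤ m :=
          Nat.sInf_le (show m ∈ {n | us ∈ AIter E C n} from h1)
        have h3 : sInf {n | w ∈ AIter E C n} ≤ sInf {n | us ∈ AIter E C n} :=
          husmax w (Finset.mem_sdiff.mpr ⟨hwU, hwC⟩)
        have h4 : sInf {n | w ∈ AIter E C n} ∈ {n | w ∈ AIter E C n} :=
          Nat.sInf_mem (hasm w hwU)
        exact hwA (AIter_mono E C (h3.trans h2) h4)
    have husx1 : us ≠ x₁ := fun h => hx₁U (h ▸ husU)
    have husx2 : us ≠ x₂ := fun h => hx₂U (h ▸ husU)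
    by_cases hboth : x₁ ∈ C ∧ x₂ ∈ C
    · -- both inner nodes in C: replace them by {us, v}
      refine ⟨insert v (insert us (C \ {x₁, x₂})), ?_, ?_, ?_, ?_⟩
      · refine wrap _ ?_ ?_
        · intro z hz
          rcases Finset.mem_insert.mp hz with rfl | hz
          · exact hvV
          rcases Finset.mem_insert.mp hz with rfl | hz
          · exact husV
          · exact hC.1 (Finset.sdiff_subset hz)
        · refine claim_avoid E U v x₁ x₂ hx₁v hx₂v hx₁U hx₂U he₁ he₂ he₃ honly₁ honly₂ C _
            (fun z hz => Finset.mem_insert_of_mem (Finset.mem_insert_of_mem hz))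
            (Hstar _ (Finset.mem_insert_of_mem (Finset.mem_insert_self _ _)))
            (Or.inl (Finset.mem_insert_self _ _))
      · -- cardinality
        have hsub2 : ({x₁, x₂} : Finset α) ⊆ C := by
          intro z hz
          rcases Finset.mem_insert.mp hz with rfl | hz
          · exact hboth.1
          · exact (Finset.mem_singleton.mp hz) ▸ hboth.2
        have hcard2 : (C \ {x₁, x₂}).card + 2 = C.card := by
          have h1 := Finset.card_sdiff_add_card_eq_card hsub2
          have h2 : ({x₁, x₂} : Finset α).card = 2 := Finset.card_pair hx₁₂
          omega
        calc (insert v (insert us (C \ {x₁, x₂}))).card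
            ≤ (insert us (C \ {x₁, x₂})).card + 1 := Finset.card_insert_le _ _
          _ ≤ (C \ {x₁, x₂}).card + 1 + 1 := by
              have := Finset.card_insert_le us (C \ {x₁, x₂})
              omega
          _ = C.card := by omega
      · intro h
        rcases Finset.mem_insert.mp h with h | h
        · exact hx₁v h
        rcases Finset.mem_insert.mp h with h | h
        · exact husx1 h.symm
        · exact (Finset.mem_sdiff.mp h).2 (by simp)
      · intro h
        rcases Finset.mem_insert.mp h with h | h
        · exact hx₂v h
        rcases Finset.mem_insert.mp h with h | h
        · exact husx2 h.symm
        · exact (Finset.mem_sdiff.mp h).2 (by simp)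
    · -- exactly one inner node in C: replace it by us
      have hone : x₁ ∈ C ∨ x₂ ∈ C := by
        by_contra h
        push_neg at h
        exact hout ⟨h.1, h.2⟩
      refine ⟨insert us (C \ {x₁, x₂}), ?_, ?_, ?_, ?_⟩
      · refine wrap _ ?_ ?_
        · intro z hz
          rcases Finset.mem_insert.mp hz with rfl | hz
          · exact husV
          · exact hC.1 (Finset.sdiff_subset hz)
        · refine claim_avoid E U v x₁ x₂ hx₁v hx₂v hx₁U hx₂U he₁ he₂ he₃ honly₁ honly₂ C _
            (fun z hz => Finset.mem_insert_of_mem hz)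
            (Hstar _ (Finset.mem_insert_self _ _)) ?_
          by_cases h1 : x₁ ∈ C
          · have h2 : x₂ ∉ C := fun h => hboth ⟨h1, h⟩
            exact Or.inr (Or.inr (Or.inl h2))
          · exact Or.inr (Or.inl h1)
      · -- cardinality: at least one of x₁, x₂ is in C
        have h1 : C \ {x₁, x₂} ⊆ C.erase (if x₁ ∈ C then x₁ else x₂) := by
          intro z hz
          rcases Finset.mem_sdiff.mp hz with ⟨hzC, hzn⟩
          simp only [Finset.mem_insert, Finset.mem_singleton] at hzn
          push_neg at hzn
          refine Finset.mem_erase.mpr ⟨?_, hzC⟩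
          split
          · exact hzn.1
          · exact hzn.2
        have h2 : (if x₁ ∈ C then x₁ else x₂) ∈ C := by
          split
          · assumption
          · exact hone.resolve_left (by assumption)
        have h3 : (C \ {x₁, x₂}).card ≤ C.card - 1 := by
          calc (C \ {x₁, x₂}).card ≤ (C.erase (if x₁ ∈ C then x₁ else x₂)).card :=
              Finset.card_le_card h1
            _ = C.card - 1 := Finset.card_erase_of_mem h2
        have h4 : 1 ≤ C.card := Finset.card_pos.mpr ⟨_, h2⟩
        have h5 := Finset.card_insert_le us (C \ {x₁, x₂})
        omega
      · intro h
        rcases Finset.mem_insert.mp h with h | h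
        · exact husx1 h.symm
        · exact (Finset.mem_sdiff.mp h).2 (by simp)
      · intro h
        rcases Finset.mem_insert.mp h with h | h
        · exact husx2 h.symm
        · exact (Finset.mem_sdiff.mp h).2 (by simp)

/-- Lemma 6: let `G = (V, E)` be a hypergraph containing an
AND-gadget `AND(U, v)` (edges `U ∪ {x₁}`, `U ∪ {x₂}`, `{x₁, x₂, v}`) as a subgraph,
such that the inner nodes `x₁, x₂` occur only in edges of the gadget. Then `G` has a
minimum core `C` with `C ⊆ V \ {x₁, x₂}`. -/
theorem and_gadget_has_min_core_avoiding_inner_nodes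
    (V : Finset α) (E : Finset (Finset α)) (hE : ∀ e ∈ E, e ⊆ V)
    (U : Finset α) (v x₁ x₂ : α)
    (hx₁₂ : x₁ ≠ x₂) (hx₁v : x₁ ≠ v) (hx₂v : x₂ ≠ v)
    (hx₁U : x₁ ∉ U) (hx₂U : x₂ ∉ U) (hvU : v ∉ U)
    (he₁ : insert x₁ U ∈ E) (he₂ : insert x₂ U ∈ E)
    (he₃ : ({x₁, x₂, v} : Finset α) ∈ E)
    (honly₁ : ∀ e ∈ E, x₁ ∈ e → e = insert x₁ U ∨ e = {x₁, x₂, v})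
    (honly₂ : ∀ e ∈ E, x₂ ∈ e → e = insert x₂ U ∨ e = {x₁, x₂, v}) :
    ∃ C : Finset α, IsCore V E C ∧ (∀ C' : Finset α, IsCore V E C' → C.card ≤ C'.card) ∧
      C ⊆ V \ {x₁, x₂} := by
    classical
  have hVcore : IsCore V E V :=
    ⟨Finset.Subset.refl V, fun e he w hw => .base w (hE e he hw)⟩
  have hne : {k | ∃ C, IsCore V E C ∧ C.card = k}.Nonempty := ⟨V.card, V, hVcore, rfl⟩
  obtain ⟨C, hC, hCcard⟩ := Nat.sInf_mem hne
  have hmin : ∀ C' : Finset α, IsCore V E C' → C.card ≤ C'.card := by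
    intro C' hC'
    rw [hCcard]
    exact Nat.sInf_le ⟨C', hC', rfl⟩
  obtain ⟨C'', h1, h2, h3, h4⟩ := replace_core V E hE U v x₁ x₂ hx₁₂ hx₁v hx₂v hx₁U hx₂U
    he₁ he₂ he₃ honly₁ honly₂ C hC
  refine ⟨C'', h1, fun C' hC' => le_trans h2 (hmin C' hC'), ?_⟩
  intro a ha
  refine Finset.mem_sdiff.mpr ⟨h1.1 ha, ?_⟩
  simp only [Finset.mem_insert, Finset.mem_singleton]
  push_neg
  exact ⟨fun h => h3 (h ▸ ha), fun h => h4 (h ▸ ha)⟩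
end

section
/- Let M = (A, B, E) be a MINREP instance and let H be the hypergraph constructed from it as described. Then the minimum core size of H equals the minimum cardinality of a MINREP solution of M, i.e., the minimum of |A' ∪ B'| over A' ⊆ A, B' ⊆ B such that every super-edge A_iB_j ∈ ℰ is covered by some ab ∈ E with a ∈ A', b ∈ B'. -/
/-!
A solution `S` yields the core `mV '' S`: the first-layer gadgets of the covering edges
assimilate all of `ℰ₁ ∪ ℰ₂`, which fires every second-layer gadget and then everything else.

Conversely, let `C` be a core and let `u` be the vertex of `ℰ₁ ∪ ℰ₂` assimilated last, in round
`N`. Every big second-layer edge contains `u`, so up to round `N` such an edge can only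
assimilate `u` itself. Call `v ∈ A ∪ B` early if `mV v` is assimilated before round `N`. Each
early `v` is charged to its own core vertex: `mV v`, the inner nodes of its second-layer
gadget, or an inner node of the first-layer gadget that assimilated it after its other
endpoint. A super-edge that is not covered by an edge between early vertices needs, for each of
its two copies, a further core vertex: the copy itself, an inner node of one of its gadgets, or
(for the copy `u` only) an inner node of a second-layer gadget. The early vertices together
with one covering edge for each remaining super-edge therefore form a solution with at most
`|C|` vertices.
-/

variable {α : Type*} [DecidableEq α]

section MINREP

/-- Vertex type for the MINREP reduction: original graph vertices, super-edge vertices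
(two copies, tagged by a `Bool`), inner nodes of first-layer AND-gadgets (indexed by a
graph edge `(a, b)`, a copy tag `k` and which of the two inner nodes `w`), and inner
nodes of second-layer AND-gadgets (indexed by an output vertex `v` and which of the two
inner nodes `w`). -/
abbrev MRVert (α : Type*) :=
  α ⊕ ((Finset α × Finset α × Bool) ⊕ ((α × α × Bool × Bool) ⊕ (α × Bool)))

instance : DecidableEq (MRVert α) :=
  @instDecidableEqSum _ _ inferInstance
    (@instDecidableEqSum _ _ inferInstance (@instDecidableEqSum _ _ inferInstance inferInstance))

/-- a vertex of `A ∪ B` -/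
def mV (a : α) : MRVert α := Sum.inl a
/-- the copy in `ℰ_k` of the super-edge `A_i B_j` -/
def mE (Ai Bj : Finset α) (k : Bool) : MRVert α := Sum.inr (Sum.inl (Ai, Bj, k))
/-- inner node `w` of the first-layer gadget `AND({a, b}, e_k)` -/
def mX1 (a b : α) (k w : Bool) : MRVert α := Sum.inr (Sum.inr (Sum.inl (a, b, k, w)))
/-- inner node `w` of the second-layer gadget `AND(ℰ_1 ∪ ℰ_2, v)` -/
def mX2 (v : α) (w : Bool) : MRVert α := Sum.inr (Sum.inr (Sum.inr (v, w)))

/-- The super-edges `ℰ`: pairs `(A_i, B_j)` such that some `ab ∈ E` has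
`a ∈ A_i` and `b ∈ B_j`. -/
def superEdges (PA PB : Finset (Finset α)) (Eg : Finset (α × α)) :
    Finset (Finset α × Finset α) :=
  (PA ×ˢ PB).filter fun p => ∃ q ∈ Eg, q.1 ∈ p.1 ∧ q.2 ∈ p.2

/-- The vertices `ℰ_1 ∪ ℰ_2`: both copies of every super-edge. -/
def eeVerts (PA PB : Finset (Finset α)) (Eg : Finset (α × α)) : Finset (MRVert α) :=
  (superEdges PA PB Eg).biUnion fun p =>
    {mE p.1 p.2 false, mE p.1 p.2 true}

/-- The edges of the first-layer gadgets `AND({a, b}, e_k)` for every super-edge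
`A_i B_j`, every `ab ∈ E` with `a ∈ A_i, b ∈ B_j`, and `k ∈ {1, 2}`. -/
def firstLayerEdges (PA PB : Finset (Finset α)) (Eg : Finset (α × α)) :
    Finset (Finset (MRVert α)) :=
  (superEdges PA PB Eg).biUnion fun p =>
    (Eg.filter fun q => q.1 ∈ p.1 ∧ q.2 ∈ p.2).biUnion fun q =>
      ({false, true} : Finset Bool).biUnion fun k =>
        {{mV q.1, mV q.2, mX1 q.1 q.2 k false},
         {mV q.1, mV q.2, mX1 q.1 q.2 k true},
         {mX1 q.1 q.2 k false, mX1 q.1 q.2 k true, mE p.1 p.2 k}}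

/-- The edges of the second-layer gadgets `AND(ℰ_1 ∪ ℰ_2, v)` for every `v ∈ A ∪ B`. -/
def secondLayerEdges (A B : Finset α) (PA PB : Finset (Finset α))
    (Eg : Finset (α × α)) : Finset (Finset (MRVert α)) :=
  (A ∪ B).biUnion fun v =>
    {insert (mX2 v false) (eeVerts PA PB Eg),
     insert (mX2 v true) (eeVerts PA PB Eg),
     {mX2 v false, mX2 v true, mV v}}

/-- The edge set of the constructed hypergraph `H`. -/
def mrEdges (A B : Finset α) (PA PB : Finset (Finset α)) (Eg : Finset (α × α)) :
    Finset (Finset (MRVert α)) :=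
  firstLayerEdges PA PB Eg ∪ secondLayerEdges A B PA PB Eg

/-- The vertex set of the constructed hypergraph `H`:
`V_0 = A ∪ B ∪ ℰ_1 ∪ ℰ_2` together with the gadget inner nodes `V_1`. -/
def mrVerts (A B : Finset α) (PA PB : Finset (Finset α)) (Eg : Finset (α × α)) :
    Finset (MRVert α) :=
  (A ∪ B).image mV ∪ eeVerts PA PB Eg ∪
    (firstLayerEdges PA PB Eg).biUnion id ∪ (secondLayerEdges A B PA PB Eg).biUnion id

section Propagation

variable {β : Type*}

def AssimAt (E : Finset (Finset β)) (C : Finset β) : ℕ → β → Prop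
  | 0, v => v ∈ C
  | n + 1, v => AssimAt E C n v ∨ ∃ e ∈ E, v ∈ e ∧ ∀ w ∈ e, w ≠ v → AssimAt E C n w

noncomputable def assimLevel (E : Finset (Finset β)) (C : Finset β) (v : β) : ℕ :=
  sInf {n | AssimAt E C n v}

def AssimBefore (E : Finset (Finset β)) (C : Finset β) (x y : β) : Prop :=
  ∃ m < assimLevel E C y, AssimAt E C m x

variable {E : Finset (Finset β)} {C : Finset β} {m n : ℕ} {v x y : β}

theorem AssimAt.mono (hmn : m ≤ n) (h : AssimAt E C m v) : AssimAt E C n v := by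
  induction hmn with
  | refl => exact h
  | step _ ih => exact .inl ih

theorem AssimAt.mem_or_exists_edge (h : AssimAt E C n v) :
    v ∈ C ∨ ∃ m < n, ∃ e ∈ E, v ∈ e ∧ ∀ w ∈ e, w ≠ v → AssimAt E C m w := by
  induction n with
  | zero => exact .inl h
  | succ n ih =>
    rcases h with h | ⟨e, he, hve, hw⟩
    · exact (ih h).imp_right fun ⟨m, hm, hedge⟩ => ⟨m, by omega, hedge⟩
    · exact .inr ⟨n, by omega, e, he, hve, hw⟩

theorem assimLevel_le (h : AssimAt E C n v) : assimLevel E C v ≤ n :=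
  Nat.sInf_le h

theorem assimAt_assimLevel (h : ∃ n, AssimAt E C n v) :
    AssimAt E C (assimLevel E C v) v :=
  Nat.sInf_mem h

theorem Assim.exists_assimAt (h : Assim E C v) : ∃ n, AssimAt E C n v := by
  induction h with
  | base v hv => exact ⟨0, hv⟩
  | step e v he hve _ ih =>
    refine ⟨e.sup (assimLevel E C) + 1, .inr ⟨e, he, hve, fun w hwe hne => ?_⟩⟩
    exact (assimAt_assimLevel (ih w hwe hne)).mono (Finset.le_sup hwe)

theorem Assim.of_triple [DecidableEq β] {z : β} (he : {x, y, z} ∈ E) (hx : Assim E C x)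
    (hy : Assim E C y) : Assim E C z := by
  refine .step _ z he (by simp) fun w hw hne => ?_
  simp only [Finset.mem_insert, Finset.mem_singleton] at hw
  rcases hw with rfl | rfl | rfl
  exacts [hx, hy, absurd rfl hne]

theorem AssimBefore.asymm (hxy : AssimBefore E C x y) (hyx : AssimBefore E C y x) : False := by
  obtain ⟨m, hm, hx⟩ := hxy
  obtain ⟨m', hm', hy⟩ := hyx
  have := assimLevel_le hx
  have := assimLevel_le hy
  omega

theorem AssimBefore.exists_lt (hxy : AssimBefore E C x y) (hy : AssimAt E C n y) :
    ∃ m < n, AssimAt E C m x := by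
  obtain ⟨m, hm, hx⟩ := hxy
  exact ⟨m, hm.trans_le (assimLevel_le hy), hx⟩

theorem exists_last_assimilated {X : Finset β} (hX : X.Nonempty)
    (h : ∀ x ∈ X, ∃ n, AssimAt E C n x) :
    ∃ N, ∃ u ∈ X, (∀ m < N, ¬ AssimAt E C m u) ∧ ∀ x ∈ X, AssimAt E C N x := by
  obtain ⟨u, hu, hNu⟩ := Finset.exists_mem_eq_sup X hX (assimLevel E C)
  refine ⟨X.sup (assimLevel E C), u, hu, fun m hm hum => ?_, fun x hx => ?_⟩
  · have := assimLevel_le hum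
    omega
  · exact (assimAt_assimLevel (h x hx)).mono (Finset.le_sup hx)

end Propagation

theorem exists_card_le_two_mul_of_forall_exists_pair {ι β : Type*} [DecidableEq β]
    (U : Finset ι) (R : ι → β × β → Prop) (h : ∀ i ∈ U, ∃ q, R i q) :
    ∃ T : Finset β, T.card ≤ 2 * U.card ∧ ∀ i ∈ U, ∃ q, R i q ∧ q.1 ∈ T ∧ q.2 ∈ T := by
  classical
  induction U using Finset.induction_on with
  | empty => exact ⟨∅, by simp, by simp⟩
  | insert i U hi ih =>
    obtain ⟨T, hT, hTU⟩ := ih fun j hj => h j (Finset.mem_insert_of_mem hj)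
    obtain ⟨q, hq⟩ := h i (Finset.mem_insert_self i U)
    refine ⟨insert q.1 (insert q.2 T), ?_, fun j hj => ?_⟩
    · have h1 := Finset.card_insert_le q.1 (insert q.2 T)
      have h2 := Finset.card_insert_le q.2 T
      rw [Finset.card_insert_of_notMem hi]
      omega
    · rcases Finset.mem_insert.1 hj with rfl | hj
      · exact ⟨q, hq, by simp, by simp⟩
      · obtain ⟨q', hq', h1, h2⟩ := hTU j hj
        exact ⟨q', hq', by simp [h1], by simp [h2]⟩

def SuperEdgeCoveredBy (Eg : Finset (α × α)) (P : α → Prop) (p : Finset α × Finset α) : Prop :=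
  ∃ q ∈ Eg, q.1 ∈ p.1 ∧ q.2 ∈ p.2 ∧ P q.1 ∧ P q.2

theorem eq_of_mem_superEdges {PA PB : Finset (Finset α)} {Eg : Finset (α × α)}
    (hPAdisj : ∀ p ∈ PA, ∀ q ∈ PA, p ≠ q → Disjoint p q)
    (hPBdisj : ∀ p ∈ PB, ∀ q ∈ PB, p ≠ q → Disjoint p q)
    {p p' : Finset α × Finset α} {a b : α}
    (hp : p ∈ superEdges PA PB Eg) (hp' : p' ∈ superEdges PA PB Eg)
    (ha : a ∈ p.1) (ha' : a ∈ p'.1) (hb : b ∈ p.2) (hb' : b ∈ p'.2) : p = p' := by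
  simp only [superEdges, Finset.mem_filter, Finset.mem_product] at hp hp'
  refine Prod.ext (by_contra fun hne => ?_) (by_contra fun hne => ?_)
  · exact Finset.disjoint_left.1 (hPAdisj _ hp.1.1 _ hp'.1.1 hne) ha ha'
  · exact Finset.disjoint_left.1 (hPBdisj _ hp.1.2 _ hp'.1.2 hne) hb hb'

attribute [local simp] mV mE mX1 mX2

section Edges

variable {A B : Finset α} {PA PB : Finset (Finset α)} {Eg : Finset (α × α)}
  {e : Finset (MRVert α)}

local notation "𝓗" => mrEdges A B PA PB Eg

theorem mem_eeVerts {x : MRVert α} :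
    x ∈ eeVerts PA PB Eg ↔ ∃ p ∈ superEdges PA PB Eg, ∃ k, x = mE p.1 p.2 k := by
  simp only [eeVerts, Finset.mem_biUnion, Finset.mem_insert, Finset.mem_singleton]
  constructor
  · rintro ⟨p, hp, h | h⟩ <;> exact ⟨p, hp, _, h⟩
  · rintro ⟨p, hp, k, rfl⟩
    cases k <;> simp [hp]

theorem mem_mrEdges : e ∈ 𝓗 ↔
    (∃ p ∈ superEdges PA PB Eg, ∃ q ∈ Eg, q.1 ∈ p.1 ∧ q.2 ∈ p.2 ∧ ∃ k,
      (∃ w, e = {mV q.1, mV q.2, mX1 q.1 q.2 k w}) ∨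
        e = {mX1 q.1 q.2 k false, mX1 q.1 q.2 k true, mE p.1 p.2 k}) ∨
    ∃ v ∈ A ∪ B, (∃ w, e = insert (mX2 v w) (eeVerts PA PB Eg)) ∨
      e = {mX2 v false, mX2 v true, mV v} := by
  simp only [mrEdges, firstLayerEdges, secondLayerEdges, Finset.mem_union, Finset.mem_biUnion,
    Finset.mem_filter, Finset.mem_insert, Finset.mem_singleton]
  constructor
  · rintro (⟨p, hp, q, ⟨hq, h1, h2⟩, k, -, h | h | h⟩ | ⟨v, hv, h | h | h⟩)
    · exact .inl ⟨p, hp, q, hq, h1, h2, k, .inl ⟨_, h⟩⟩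
    · exact .inl ⟨p, hp, q, hq, h1, h2, k, .inl ⟨_, h⟩⟩
    · exact .inl ⟨p, hp, q, hq, h1, h2, k, .inr h⟩
    · exact .inr ⟨v, hv, .inl ⟨_, h⟩⟩
    · exact .inr ⟨v, hv, .inl ⟨_, h⟩⟩
    · exact .inr ⟨v, hv, .inr h⟩
  · rintro (⟨p, hp, q, hq, h1, h2, k, ⟨w, rfl⟩ | rfl⟩ | ⟨v, hv, ⟨w, rfl⟩ | rfl⟩)
    · exact .inl ⟨p, hp, q, ⟨hq, h1, h2⟩, k, by cases k <;> simp, by cases w <;> simp⟩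
    · exact .inl ⟨p, hp, q, ⟨hq, h1, h2⟩, k, by cases k <;> simp, by simp⟩
    · exact .inr ⟨v, hv, by cases w <;> simp⟩
    · exact .inr ⟨v, hv, by simp⟩

theorem mrEdge_eq_of_mV_mem {v : α} (he : e ∈ 𝓗) (hv : mV v ∈ e) :
    (∃ q ∈ Eg, ∃ k w, e = {mV q.1, mV q.2, mX1 q.1 q.2 k w} ∧ (v = q.1 ∨ v = q.2)) ∨
      e = {mX2 v false, mX2 v true, mV v} := by
  rcases mem_mrEdges.1 he with
    ⟨p, -, q, hq, -, -, k, ⟨w, rfl⟩ | rfl⟩ | ⟨u, -, ⟨w, rfl⟩ | rfl⟩ <;>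
    simp [mem_eeVerts] at hv
  · exact .inl ⟨q, hq, k, w, rfl, hv⟩
  · exact hv ▸ .inr rfl

theorem mrEdge_eq_of_mX1_mem {a b : α} {k w : Bool} (he : e ∈ 𝓗) (hx : mX1 a b k w ∈ e) :
    e = {mV a, mV b, mX1 a b k w} ∨
      ∃ x y, e = {mX1 a b k false, mX1 a b k true, mE x y k} := by
  rcases mem_mrEdges.1 he with
    ⟨p, -, q, -, -, -, k', ⟨w', rfl⟩ | rfl⟩ | ⟨u, -, ⟨w', rfl⟩ | rfl⟩ <;>
    simp [mem_eeVerts] at hx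
  · obtain ⟨rfl, rfl, rfl, rfl⟩ := hx
    exact .inl rfl
  · rcases hx with ⟨rfl, rfl, rfl, -⟩ | ⟨rfl, rfl, rfl, -⟩ <;> exact .inr ⟨_, _, rfl⟩

theorem mrEdge_eq_of_mE_mem {x y : Finset α} {k : Bool} (he : e ∈ 𝓗) (hx : mE x y k ∈ e) :
    (∃ q ∈ Eg, q.1 ∈ x ∧ q.2 ∈ y ∧
      e = {mX1 q.1 q.2 k false, mX1 q.1 q.2 k true, mE x y k}) ∨
      ∃ v w, e = insert (mX2 v w) (eeVerts PA PB Eg) := by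
  rcases mem_mrEdges.1 he with
    ⟨p, -, q, hq, h1, h2, k', ⟨w', rfl⟩ | rfl⟩ | ⟨u, -, ⟨w', rfl⟩ | rfl⟩ <;>
    simp [mem_eeVerts] at hx
  · obtain ⟨rfl, rfl, rfl⟩ := hx
    exact .inl ⟨q, hq, h1, h2, rfl⟩
  · exact .inr ⟨u, w', rfl⟩

theorem mrEdge_eq_of_mX2_mem {v : α} {w : Bool} (he : e ∈ 𝓗) (hx : mX2 v w ∈ e) :
    e = insert (mX2 v w) (eeVerts PA PB Eg) ∨ e = {mX2 v false, mX2 v true, mV v} := by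
  rcases mem_mrEdges.1 he with
    ⟨p, -, q, -, -, -, k, ⟨w', rfl⟩ | rfl⟩ | ⟨u, -, ⟨w', rfl⟩ | rfl⟩ <;>
    simp [mem_eeVerts] at hx
  · obtain ⟨rfl, rfl⟩ := hx
    exact .inl rfl
  · rcases hx with ⟨rfl, -⟩ | ⟨rfl, -⟩ <;> exact .inr rfl

theorem mX2_ne_of_mem_eeVerts {u : MRVert α} (hu : u ∈ eeVerts PA PB Eg) (v : α) (w : Bool) :
    u ≠ mX2 v w := by
  obtain ⟨p, -, k, rfl⟩ := mem_eeVerts.1 hu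
  simp

theorem assim_of_forall_superEdgeCoveredBy (hEg : ∀ q ∈ Eg, q.1 ∈ A ∧ q.2 ∈ B) {S : Finset α}
    (hS : ∀ p ∈ superEdges PA PB Eg, SuperEdgeCoveredBy Eg (· ∈ S) p) :
    ∀ e ∈ 𝓗, ∀ x ∈ e, Assim 𝓗 (S.image mV) x := by
  have hSV : ∀ v ∈ S, Assim 𝓗 (S.image mV) (mV v) := fun v hv =>
    .base _ (Finset.mem_image_of_mem _ hv)
  have hE : ∀ p ∈ superEdges PA PB Eg, ∀ k, Assim 𝓗 (S.image mV) (mE p.1 p.2 k) := by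
    intro p hp k
    obtain ⟨q, hq, h1, h2, hq1, hq2⟩ := hS p hp
    have hX1 : ∀ w, Assim 𝓗 (S.image mV) (mX1 q.1 q.2 k w) := fun w =>
      .of_triple (mem_mrEdges.2 (.inl ⟨p, hp, q, hq, h1, h2, k, .inl ⟨w, rfl⟩⟩))
        (hSV _ hq1) (hSV _ hq2)
    exact .of_triple (mem_mrEdges.2 (.inl ⟨p, hp, q, hq, h1, h2, k, .inr rfl⟩))
      (hX1 false) (hX1 true)
  have hEE : ∀ x ∈ eeVerts PA PB Eg, Assim 𝓗 (S.image mV) x := fun x hx => by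
    obtain ⟨p, hp, k, rfl⟩ := mem_eeVerts.1 hx
    exact hE p hp k
  have hX2 : ∀ v ∈ A ∪ B, ∀ w, Assim 𝓗 (S.image mV) (mX2 v w) := fun v hv w =>
    .step _ _ (mem_mrEdges.2 (.inr ⟨v, hv, .inl ⟨w, rfl⟩⟩)) (Finset.mem_insert_self _ _)
      fun x hx hne => hEE x ((Finset.mem_insert.1 hx).resolve_left hne)
  have hV : ∀ v ∈ A ∪ B, Assim 𝓗 (S.image mV) (mV v) := fun v hv =>
    .of_triple (mem_mrEdges.2 (.inr ⟨v, hv, .inr rfl⟩)) (hX2 v hv false) (hX2 v hv true)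
  have hVE : ∀ q ∈ Eg, Assim 𝓗 (S.image mV) (mV q.1) ∧ Assim 𝓗 (S.image mV) (mV q.2) :=
    fun q hq => ⟨hV _ (Finset.mem_union_left _ (hEg q hq).1),
      hV _ (Finset.mem_union_right _ (hEg q hq).2)⟩
  intro e he x hx
  rcases mem_mrEdges.1 he with
    ⟨p, hp, q, hq, h1, h2, k, ⟨w, rfl⟩ | rfl⟩ | ⟨v, hv, ⟨w, rfl⟩ | rfl⟩
  · simp only [Finset.mem_insert, Finset.mem_singleton] at hx
    rcases hx with rfl | rfl | rfl
    exacts [(hVE q hq).1, (hVE q hq).2, .of_triple he (hVE q hq).1 (hVE q hq).2]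
  · have hX1 : ∀ w, Assim 𝓗 (S.image mV) (mX1 q.1 q.2 k w) := fun w =>
      .of_triple (mem_mrEdges.2 (.inl ⟨p, hp, q, hq, h1, h2, k, .inl ⟨w, rfl⟩⟩))
        (hVE q hq).1 (hVE q hq).2
    simp only [Finset.mem_insert, Finset.mem_singleton] at hx
    rcases hx with rfl | rfl | rfl
    exacts [hX1 false, hX1 true, hE p hp k]
  · rcases Finset.mem_insert.1 hx with rfl | hx
    exacts [hX2 v hv w, hEE x hx]
  · simp only [Finset.mem_insert, Finset.mem_singleton] at hx
    rcases hx with rfl | rfl | rfl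
    exacts [hX2 v hv false, hX2 v hv true, hV v hv]

theorem isCore_image_mV (hEg : ∀ q ∈ Eg, q.1 ∈ A ∧ q.2 ∈ B) {S : Finset α} (hSAB : S ⊆ A ∪ B)
    (hS : ∀ p ∈ superEdges PA PB Eg, SuperEdgeCoveredBy Eg (· ∈ S) p) :
    IsCore (mrVerts A B PA PB Eg) 𝓗 (S.image mV) := by
  refine ⟨fun x hx => ?_, assim_of_forall_superEdgeCoveredBy hEg hS⟩
  obtain ⟨v, hv, rfl⟩ := Finset.mem_image.1 hx
  exact Finset.mem_union_left _ (Finset.mem_union_left _ (Finset.mem_union_left _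
    (Finset.mem_image_of_mem _ (hSAB hv))))

end Edges

def IsEarly (E : Finset (Finset (MRVert α))) (C : Finset (MRVert α)) (N : ℕ) (v : α) : Prop :=
  ∃ m < N, AssimAt E C m (mV v)

def IsCharge (E : Finset (Finset (MRVert α))) (C : Finset (MRVert α)) (v : α)
    (c : MRVert α) : Prop :=
  c = mV v ∨ (c = mX2 v false ∧ mX2 v true ∈ C) ∨
    ∃ a b k w, c = mX1 a b k w ∧ (v = a ∨ v = b) ∧
      ∀ x, (x = a ∨ x = b) → x ≠ v → AssimBefore E C (mV x) (mV v)

def IsSpare (Eg : Finset (α × α)) (C : Finset (MRVert α)) (u : MRVert α)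
    (p : Finset α × Finset α) (k : Bool) (c : MRVert α) : Prop :=
  c = mE p.1 p.2 k ∨ (∃ q ∈ Eg, q.1 ∈ p.1 ∧ q.2 ∈ p.2 ∧ ∃ w, c = mX1 q.1 q.2 k w) ∨
    mE p.1 p.2 k = u ∧ ∃ v, c = mX2 v true ∨ c = mX2 v false ∧ mX2 v true ∉ C

section Charging

variable {E : Finset (Finset (MRVert α))} {C : Finset (MRVert α)} {N : ℕ} {u c : MRVert α}

theorem IsCharge.unique {v v' : α} (h : IsCharge E C v c) (h' : IsCharge E C v' c) :
    v = v' := by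
  rcases h with rfl | ⟨rfl, -⟩ | ⟨a, b, k, w, rfl, hv, hlow⟩ <;>
    rcases h' with h' | ⟨h', -⟩ | ⟨a', b', k', w', h', hv', hlow'⟩ <;> simp at h'
  · exact h'
  · exact h'
  · obtain ⟨rfl, rfl, rfl, rfl⟩ := h'
    by_contra hne
    exact (hlow v' hv' (Ne.symm hne)).asymm (hlow' v hv hne)

theorem IsSpare.unique {PA PB : Finset (Finset α)} {Eg : Finset (α × α)}
    (hPAdisj : ∀ p ∈ PA, ∀ q ∈ PA, p ≠ q → Disjoint p q)
    (hPBdisj : ∀ p ∈ PB, ∀ q ∈ PB, p ≠ q → Disjoint p q)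
    {p p' : Finset α × Finset α} {k k' : Bool}
    (hp : p ∈ superEdges PA PB Eg) (hp' : p' ∈ superEdges PA PB Eg)
    (h : IsSpare Eg C u p k c) (h' : IsSpare Eg C u p' k' c) : (p, k) = (p', k') := by
  rcases h with rfl | ⟨q, hq, h1, h2, w, rfl⟩ | ⟨hpu, v, rfl | ⟨rfl, -⟩⟩ <;>
    rcases h' with h' | ⟨q', hq', h1', h2', w', h'⟩ | ⟨hpu', v', h' | ⟨h', -⟩⟩ <;>
    simp at h'
  · obtain ⟨h1, h2, rfl⟩ := h'
    exact Prod.ext (Prod.ext h1 h2) rfl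
  · obtain ⟨e1, e2, rfl, -⟩ := h'
    rw [eq_of_mem_superEdges hPAdisj hPBdisj hp hp' h1 (e1 ▸ h1') h2 (e2 ▸ h2')]
  all_goals
    obtain ⟨h1, h2, rfl⟩ := by simpa using hpu.trans hpu'.symm
    exact Prod.ext (Prod.ext h1 h2) rfl

theorem superEdgeCoveredBy_of_isCharge_of_isSpare {Eg : Finset (α × α)} {v : α}
    {p : Finset α × Finset α} {k : Bool} (hv : IsEarly E C N v) (h : IsCharge E C v c)
    (h' : IsSpare Eg C u p k c) : SuperEdgeCoveredBy Eg (IsEarly E C N) p := by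
  obtain ⟨n, hn, hvn⟩ := hv
  rcases h with rfl | ⟨rfl, hC⟩ | ⟨a, b, k, w, rfl, hv, hlow⟩ <;>
    rcases h' with h' | ⟨q, hq, h1, h2, w', h'⟩ | ⟨-, v', h' | ⟨h', hC'⟩⟩ <;> simp at h'
  · exact absurd (h' ▸ hC) hC'
  · obtain ⟨rfl, rfl, rfl, rfl⟩ := h'
    have hearly : ∀ x, (x = q.1 ∨ x = q.2) → IsEarly E C N x := fun x hx => by
      by_cases hxv : x = v
      · exact hxv ▸ ⟨n, hn, hvn⟩
      · obtain ⟨m, hm, hxm⟩ := (hlow x hx hxv).exists_lt hvn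
        exact ⟨m, by omega, hxm⟩
    exact ⟨q, hq, h1, h2, hearly _ (.inl rfl), hearly _ (.inr rfl)⟩

end Charging

section Core

variable {A B : Finset α} {PA PB : Finset (Finset α)} {Eg : Finset (α × α)}
  {C : Finset (MRVert α)} {N : ℕ} {u : MRVert α}

local notation "𝓗" => mrEdges A B PA PB Eg

theorem assimAt_mX1_cases {a b : α} {k w : Bool} {n : ℕ} (h : AssimAt 𝓗 C n (mX1 a b k w)) :
    (∃ w', mX1 a b k w' ∈ C) ∨ ∃ m < n, AssimAt 𝓗 C m (mV a) ∧ AssimAt 𝓗 C m (mV b) := by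
  induction n using Nat.strong_induction_on generalizing w with
  | _ n ih =>
  rcases h.mem_or_exists_edge with hC | ⟨m, hm, e, he, hxe, hrest⟩
  · exact .inl ⟨w, hC⟩
  rcases mrEdge_eq_of_mX1_mem he hxe with rfl | ⟨x, y, rfl⟩
  · exact .inr ⟨m, hm, hrest _ (by simp) (by simp), hrest _ (by simp) (by simp)⟩
  · rcases ih m hm (hrest (mX1 a b k !w) (by cases w <;> simp) (by simp)) with h | ⟨m', hm', h⟩
    · exact .inl h
    · exact .inr ⟨m', by omega, h⟩

theorem assimAt_mX2_cases (hu : u ∈ eeVerts PA PB Eg) (hlast : ∀ m < N, ¬ AssimAt 𝓗 C m u)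
    {v : α} {w : Bool} {n : ℕ} (hn : n ≤ N) (h : AssimAt 𝓗 C n (mX2 v w)) :
    (∃ w', mX2 v w' ∈ C) ∧ (mX2 v w ∈ C ∨ ∃ m < n, AssimAt 𝓗 C m (mV v)) := by
  induction n using Nat.strong_induction_on generalizing w with
  | _ n ih =>
  rcases h.mem_or_exists_edge with hC | ⟨m, hm, e, he, hxe, hrest⟩
  · exact ⟨⟨w, hC⟩, .inl hC⟩
  rcases mrEdge_eq_of_mX2_mem he hxe with rfl | rfl
  · exact (hlast m (by omega)
      (hrest u (Finset.mem_insert_of_mem hu) (mX2_ne_of_mem_eeVerts hu v w))).elim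
  · have hother := hrest (mX2 v !w) (by cases w <;> simp) (by simp)
    exact ⟨(ih m hm (by omega) hother).1, .inr ⟨m, hm, hrest _ (by simp) (by simp)⟩⟩

theorem exists_isCharge (hu : u ∈ eeVerts PA PB Eg) (hlast : ∀ m < N, ¬ AssimAt 𝓗 C m u)
    {v : α} (hv : IsEarly 𝓗 C N v) : ∃ c ∈ C, IsCharge 𝓗 C v c := by
  obtain ⟨n, hn, h⟩ := hv
  have hlevel := assimLevel_le h
  rcases (assimAt_assimLevel ⟨n, h⟩).mem_or_exists_edge with
    hC | ⟨m, hm, e, he, hve, hrest⟩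
  · exact ⟨_, hC, .inl rfl⟩
  rcases mrEdge_eq_of_mV_mem he hve with ⟨q, -, k, w, rfl, hvq⟩ | rfl
  · rcases assimAt_mX1_cases (hrest (mX1 q.1 q.2 k w) (by simp) (by simp)) with
      ⟨w', hw'⟩ | ⟨m', hm', h1, h2⟩
    · refine ⟨_, hw', .inr (.inr ⟨q.1, q.2, k, w', rfl, hvq, fun x hx hxv => ⟨m, hm, ?_⟩⟩)⟩
      exact hrest _ (by rcases hx with rfl | rfl <;> simp) (by simpa using hxv)
    · have := assimLevel_le (hvq.elim (· ▸ h1) (· ▸ h2))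
      omega
  · have hX2 : ∀ w, mX2 v w ∈ C := fun w => by
      obtain ⟨-, hw | ⟨m', hm', h'⟩⟩ :=
        assimAt_mX2_cases hu hlast (by omega) (hrest (mX2 v w) (by cases w <;> simp) (by simp))
      · exact hw
      · have := assimLevel_le h'
        omega
    exact ⟨_, hX2 false, .inr (.inl ⟨rfl, hX2 true⟩)⟩

theorem superEdgeCoveredBy_or_exists_isSpare (hu : u ∈ eeVerts PA PB Eg)
    (hlast : ∀ m < N, ¬ AssimAt 𝓗 C m u) (hall : ∀ x ∈ eeVerts PA PB Eg, AssimAt 𝓗 C N x)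
    {p : Finset α × Finset α} (hp : p ∈ superEdges PA PB Eg) (k : Bool) :
    SuperEdgeCoveredBy Eg (IsEarly 𝓗 C N) p ∨ ∃ c ∈ C, IsSpare Eg C u p k c := by
  rcases (hall _ (mem_eeVerts.2 ⟨p, hp, k, rfl⟩)).mem_or_exists_edge with
    hC | ⟨m, hm, e, he, hxe, hrest⟩
  · exact .inr ⟨_, hC, .inl rfl⟩
  rcases mrEdge_eq_of_mE_mem he hxe with ⟨q, hq, h1, h2, rfl⟩ | ⟨v, w, rfl⟩
  · rcases assimAt_mX1_cases (hrest (mX1 q.1 q.2 k false) (by simp) (by simp)) with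
      ⟨w', hw'⟩ | ⟨m', hm', ha, hb⟩
    · exact .inr ⟨_, hw', .inr (.inl ⟨q, hq, h1, h2, w', rfl⟩)⟩
    · exact .inl ⟨q, hq, h1, h2, ⟨m', by omega, ha⟩, ⟨m', by omega, hb⟩⟩
  by_cases hpu : mE p.1 p.2 k = u
  · obtain ⟨⟨w', hw'⟩, -⟩ := assimAt_mX2_cases hu hlast hm.le (hrest (mX2 v w) (by simp) (by simp))
    refine .inr ?_
    by_cases ht : mX2 v true ∈ C
    · exact ⟨_, ht, .inr (.inr ⟨hpu, v, .inl rfl⟩)⟩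
    · cases w'
      · exact ⟨_, hw', .inr (.inr ⟨hpu, v, .inr ⟨rfl, ht⟩⟩)⟩
      · exact absurd hw' ht
  · exact (hlast m hm (hrest u (Finset.mem_insert_of_mem hu) (Ne.symm hpu))).elim

theorem card_add_two_mul_card_le
    (hPAdisj : ∀ p ∈ PA, ∀ q ∈ PA, p ≠ q → Disjoint p q)
    (hPBdisj : ∀ p ∈ PB, ∀ q ∈ PB, p ≠ q → Disjoint p q)
    (hu : u ∈ eeVerts PA PB Eg) (hlast : ∀ m < N, ¬ AssimAt 𝓗 C m u)
    (hall : ∀ x ∈ eeVerts PA PB Eg, AssimAt 𝓗 C N x)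
    {W : Finset α} {U : Finset (Finset α × Finset α)} (hW : ∀ v ∈ W, IsEarly 𝓗 C N v)
    (hU : ∀ p ∈ U, p ∈ superEdges PA PB Eg ∧ ¬ SuperEdgeCoveredBy Eg (IsEarly 𝓗 C N) p) :
    W.card + 2 * U.card ≤ C.card := by
  let r : α ⊕ ((Finset α × Finset α) × Bool) → MRVert α → Prop :=
    Sum.elim (IsCharge 𝓗 C) fun pk => IsSpare Eg C u pk.1 pk.2
  have key := Finset.card_le_card_of_forall_subsingleton r
    (s := W.disjSum (U ×ˢ Finset.univ)) (t := C) ?_ ?_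
  · simpa [Finset.card_disjSum, Finset.card_product, mul_comm] using key
  · rintro (v | ⟨p, k⟩) h
    · exact exists_isCharge hu hlast (hW v (by simpa using h))
    · obtain ⟨hp, hnc⟩ := hU p (by simpa using h)
      exact (superEdgeCoveredBy_or_exists_isSpare hu hlast hall hp k).resolve_left hnc
  · rintro c - (v | ⟨p, k⟩) ⟨h, hc⟩ (v' | ⟨p', k'⟩) ⟨h', hc'⟩ <;>
      simp only [Finset.inl_mem_disjSum, Finset.inr_mem_disjSum, Finset.mem_product,
        Finset.mem_univ, and_true] at h h'
    · exact congrArg Sum.inl (hc.unique hc')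
    · exact ((hU p' h').2 (superEdgeCoveredBy_of_isCharge_of_isSpare (hW v h) hc hc')).elim
    · exact ((hU p h).2 (superEdgeCoveredBy_of_isCharge_of_isSpare (hW v' h') hc' hc)).elim
    · exact congrArg Sum.inr (hc.unique hPAdisj hPBdisj (hU p h).1 (hU p' h').1 hc')

theorem exists_superEdgeCoveredBy_card_le
    (hPAdisj : ∀ p ∈ PA, ∀ q ∈ PA, p ≠ q → Disjoint p q)
    (hPBdisj : ∀ p ∈ PB, ∀ q ∈ PB, p ≠ q → Disjoint p q)
    (hC : ∀ e ∈ 𝓗, ∀ x ∈ e, Assim 𝓗 C x) :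
    ∃ S : Finset α, (∀ p ∈ superEdges PA PB Eg, SuperEdgeCoveredBy Eg (· ∈ S) p) ∧
      S.card ≤ C.card := by
  classical
  obtain hSE | ⟨p₀, hp₀⟩ := (superEdges PA PB Eg).eq_empty_or_nonempty
  · exact ⟨∅, by simp [hSE], by simp⟩
  have hcov : ∀ p ∈ superEdges PA PB Eg, ∃ q ∈ Eg, q.1 ∈ p.1 ∧ q.2 ∈ p.2 :=
    fun p hp => (Finset.mem_filter.1 hp).2
  obtain ⟨N, u, hu, hlast, hall⟩ := exists_last_assimilated (E := 𝓗) (C := C)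
    ⟨_, mem_eeVerts.2 ⟨p₀, hp₀, false, rfl⟩⟩ fun x hx => by
      obtain ⟨p, hp, k, rfl⟩ := mem_eeVerts.1 hx
      obtain ⟨q, hq, h1, h2⟩ := hcov p hp
      exact (hC _ (mem_mrEdges.2 (.inl ⟨p, hp, q, hq, h1, h2, k, .inr rfl⟩)) _
        (by simp)).exists_assimAt
  let W := (Eg.biUnion fun q => {q.1, q.2}).filter (IsEarly 𝓗 C N)
  let U := (superEdges PA PB Eg).filter (¬ SuperEdgeCoveredBy Eg (IsEarly 𝓗 C N) ·)
  obtain ⟨T, hT, hTU⟩ := exists_card_le_two_mul_of_forall_exists_pair U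
    (fun p q => q ∈ Eg ∧ q.1 ∈ p.1 ∧ q.2 ∈ p.2) fun p hp => hcov p (Finset.filter_subset _ _ hp)
  refine ⟨W ∪ T, fun p hp => ?_, ?_⟩
  · by_cases hpU : p ∈ U
    · obtain ⟨q, ⟨hq, h1, h2⟩, hq1, hq2⟩ := hTU p hpU
      exact ⟨q, hq, h1, h2, Finset.mem_union_right _ hq1, Finset.mem_union_right _ hq2⟩
    · obtain ⟨q, hq, h1, h2, hq1, hq2⟩ : SuperEdgeCoveredBy Eg (IsEarly 𝓗 C N) p := by
        simpa [U, hp] using hpU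
      refine ⟨q, hq, h1, h2, Finset.mem_union_left _ ?_, Finset.mem_union_left _ ?_⟩ <;>
        exact Finset.mem_filter.2 ⟨Finset.mem_biUnion.2 ⟨q, hq, by simp⟩, ‹_›⟩
  · calc (W ∪ T).card ≤ W.card + 2 * U.card := (Finset.card_union_le _ _).trans (by omega)
      _ ≤ C.card := card_add_two_mul_card_le hPAdisj hPBdisj hu hlast hall
          (fun v hv => (Finset.mem_filter.1 hv).2) (fun p hp => Finset.mem_filter.1 hp)

end Core

theorem minrep_minCoreSize_general
    (A B : Finset α)
    (PA PB : Finset (Finset α))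
    (hPAdisj : ∀ p ∈ PA, ∀ q ∈ PA, p ≠ q → Disjoint p q)
    (hPBdisj : ∀ p ∈ PB, ∀ q ∈ PB, p ≠ q → Disjoint p q)
    (Eg : Finset (α × α)) (hEg : ∀ q ∈ Eg, q.1 ∈ A ∧ q.2 ∈ B) :
    minCoreSize (mrVerts A B PA PB Eg) (mrEdges A B PA PB Eg) =
      sInf {k | ∃ A' ⊆ A, ∃ B' ⊆ B,
        (∀ p ∈ superEdges PA PB Eg,
          ∃ q ∈ Eg, q.1 ∈ A' ∧ q.1 ∈ p.1 ∧ q.2 ∈ B' ∧ q.2 ∈ p.2) ∧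
        (A' ∪ B').card = k} := by
  refine csInf_eq_csInf_of_forall_exists_le ?_ ?_
  · rintro _ ⟨C, ⟨-, hC⟩, rfl⟩
    obtain ⟨S, hS, hcard⟩ := exists_superEdgeCoveredBy_card_le hPAdisj hPBdisj hC
    refine ⟨_, ⟨S ∩ A, Finset.inter_subset_right, S ∩ B, Finset.inter_subset_right,
      fun p hp => ?_, rfl⟩, (Finset.card_le_card ?_).trans hcard⟩
    · obtain ⟨q, hq, h1, h2, hq1, hq2⟩ := hS p hp
      exact ⟨q, hq, Finset.mem_inter.2 ⟨hq1, (hEg q hq).1⟩, h1,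
        Finset.mem_inter.2 ⟨hq2, (hEg q hq).2⟩, h2⟩
    · exact Finset.union_subset Finset.inter_subset_left Finset.inter_subset_left
  · rintro _ ⟨A', hA', B', hB', hcov, rfl⟩
    refine ⟨_, ⟨_, isCore_image_mV hEg (Finset.union_subset_union hA' hB') fun p hp => ?_,
      rfl⟩, Finset.card_image_le⟩
    obtain ⟨q, hq, hq1, h1, hq2, h2⟩ := hcov p hp
    exact ⟨q, hq, h1, h2, Finset.mem_union_left _ hq1, Finset.mem_union_right _ hq2⟩

/-- Theorem 9: for a MINREP instance `M = (A, B, E)` (with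
partitions `PA` of `A` into parts of size `mA` and `PB` of `B` into parts of size `mB`)
and the hypergraph `H` constructed from it, the minimum core size of `H` equals the
minimum cardinality `|A' ∪ B'|` of a MINREP solution of `M`, i.e. of sets `A' ⊆ A`,
`B' ⊆ B` such that every super-edge is covered by some `ab ∈ E` with
`a ∈ A'`, `b ∈ B'`. -/
theorem minrep_minCoreSize
    (A B : Finset α) (hAB : Disjoint A B)
    (PA PB : Finset (Finset α)) (mA mB : ℕ)
    (hPAunion : PA.biUnion id = A)
    (hPAdisj : ∀ p ∈ PA, ∀ q ∈ PA, p ≠ q → Disjoint p q)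
    (hPAcard : ∀ p ∈ PA, p.card = mA)
    (hPBunion : PB.biUnion id = B)
    (hPBdisj : ∀ p ∈ PB, ∀ q ∈ PB, p ≠ q → Disjoint p q)
    (hPBcard : ∀ p ∈ PB, p.card = mB)
    (Eg : Finset (α × α)) (hEg : ∀ q ∈ Eg, q.1 ∈ A ∧ q.2 ∈ B) :
    minCoreSize (mrVerts A B PA PB Eg) (mrEdges A B PA PB Eg) =
      sInf {k | ∃ A' ⊆ A, ∃ B' ⊆ B,
        (∀ p ∈ superEdges PA PB Eg,
          ∃ q ∈ Eg, q.1 ∈ A' ∧ q.1 ∈ p.1 ∧ q.2 ∈ B' ∧ q.2 ∈ p.2) ∧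
        (A' ∪ B').card = k} :=
  minrep_minCoreSize_general A B PA PB hPAdisj hPBdisj Eg hEg

end MINREP
end

section
/- Let G = (V, E) be a hypergraph with minimum core size k for threshold function t, and for each edge e ∈ E let v_e be a new vertex (pairwise distinct, not in V). Define G' = (V ∪ {v_e : e ∈ E}, {e ∪ {v_e} : e ∈ E}) with threshold function t'(e ∪ {v_e}) := t(e). Then G' has minimum core size k for threshold function t'. -/
variable {α : Type*} [DecidableEq α]

/-- `AssimT E t C v` : vertex `v` eventually gets assimilated when the threshold
propagation process is run from the initial set `C` on the edge family `E` with
threshold function `t`: `v` is assimilated if it lies in `C`, or if it lies in some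
edge `e ∈ E` containing at least `t e` assimilated vertices (in which case `e` is
covered and all its vertices are assimilated). -/
inductive AssimT (E : Finset (Finset α)) (t : Finset α → ℕ) (C : Finset α) : α → Prop
  | base (v : α) : v ∈ C → AssimT E t C v
  | step (e W : Finset α) (v : α) : e ∈ E → v ∈ e → W ⊆ e → t e ≤ W.card →
      (∀ w ∈ W, AssimT E t C w) → AssimT E t C v

/-- `C` is a core of the hypergraph `(V, E)` for the threshold function `t`:
the threshold propagation process started from `C` covers every edge. -/
def IsCoreT (V : Finset α) (E : Finset (Finset α)) (t : Finset α → ℕ)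
    (C : Finset α) : Prop :=
  C ⊆ V ∧ ∀ e ∈ E, ∀ v ∈ e, AssimT E t C v

/-- The minimum core size of the hypergraph `(V, E)` for the threshold function `t`. -/
noncomputable def minCoreSizeT (V : Finset α) (E : Finset (Finset α))
    (t : Finset α → ℕ) : ℕ :=
  sInf {k | ∃ C, IsCoreT V E t C ∧ C.card = k}

/-- A valid firing sequence of edges. -/
inductive ValidL (E : Finset (Finset α)) (t : Finset α → ℕ) : Finset α → List (Finset α) → Prop
  | nil (C) : ValidL E t C []
  | cons (C e l) : e ∈ E → t e ≤ (e ∩ C).card → ValidL E t (C ∪ e) l → ValidL E t C (e :: l)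

/-- The set of vertices assimilated after firing the edges of `l` starting from `C`. -/
def reachL (C : Finset α) (l : List (Finset α)) : Finset α := l.foldl (· ∪ ·) C

@[simp] lemma reachL_nil (C : Finset α) : reachL C [] = C := rfl

@[simp] lemma reachL_cons (C e : Finset α) (l : List (Finset α)) :
    reachL C (e :: l) = reachL (C ∪ e) l := rfl

lemma subset_reachL (C : Finset α) (l : List (Finset α)) : C ⊆ reachL C l := by
  induction l generalizing C with
  | nil => exact subset_rfl
  | cons e l ih => exact Finset.subset_union_left.trans (ih _)

lemma reachL_mono {C D : Finset α} (h : C ⊆ D) (l : List (Finset α)) :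
    reachL C l ⊆ reachL D l := by
  induction l generalizing C D with
  | nil => exact h
  | cons e l ih => exact ih (Finset.union_subset_union_left h)

@[simp] lemma reachL_append (C : Finset α) (l₁ l₂ : List (Finset α)) :
    reachL C (l₁ ++ l₂) = reachL (reachL C l₁) l₂ := by
  simp [reachL, List.foldl_append]

lemma mem_of_reachL {C : Finset α} {l : List (Finset α)} {v : α} (h : v ∈ reachL C l) :
    v ∈ C ∨ ∃ e ∈ l, v ∈ e := by
  induction l generalizing C with
  | nil => exact Or.inl h
  | cons e l ih =>
    rcases ih (by simpa using h) with h' | h'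
    · rcases Finset.mem_union.1 h' with h'' | h''
      · exact Or.inl h''
      · exact Or.inr ⟨e, List.mem_cons_self .., h''⟩
    · obtain ⟨e', he', hv⟩ := h'
      exact Or.inr ⟨e', List.mem_cons_of_mem _ he', hv⟩

lemma edge_subset_reachL {C : Finset α} {l : List (Finset α)} {e : Finset α} (h : e ∈ l) :
    e ⊆ reachL C l := by
  induction l generalizing C with
  | nil => simp at h
  | cons e' l ih =>
    rcases List.mem_cons.1 h with rfl | h'
    · exact Finset.subset_union_right.trans (subset_reachL _ _)
    · exact ih h'

lemma ValidL.mono {E : Finset (Finset α)} {t : Finset α → ℕ} {C D : Finset α}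
    {l : List (Finset α)} (hCD : C ⊆ D) (h : ValidL E t C l) : ValidL E t D l := by
  induction h generalizing D with
  | nil => exact .nil _
  | cons C' e l he hte _ ih =>
    exact .cons _ _ _ he (hte.trans (Finset.card_le_card (Finset.inter_subset_inter_left hCD)))
      (ih (Finset.union_subset_union_left hCD))

lemma ValidL.append {E : Finset (Finset α)} {t : Finset α → ℕ} {C : Finset α}
    {l₁ l₂ : List (Finset α)} (h₁ : ValidL E t C l₁) (h₂ : ValidL E t C l₂) :
    ValidL E t C (l₁ ++ l₂) := by
  induction h₁ with
  | nil => exact h₂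
  | cons C' e l he hte _ ih =>
    exact .cons _ _ _ he hte (ih (h₂.mono Finset.subset_union_left))

lemma ValidL.mem_of {E : Finset (Finset α)} {t : Finset α → ℕ} {C : Finset α}
    {l : List (Finset α)} (h : ValidL E t C l) : ∀ e ∈ l, e ∈ E := by
  induction h with
  | nil => simp
  | cons C' e l he hte _ ih =>
    intro e' he'
    rcases List.mem_cons.1 he' with rfl | h' <;> [exact he; exact ih e' h']

lemma ValidL.get_spec {E : Finset (Finset α)} {t : Finset α → ℕ} {C : Finset α}
    {l : List (Finset α)} (h : ValidL E t C l) :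
    ∀ i (hi : i < l.length), l.get ⟨i, hi⟩ ∈ E ∧
      t (l.get ⟨i, hi⟩) ≤ ((l.get ⟨i, hi⟩) ∩ reachL C (l.take i)).card := by
  induction h with
  | nil => intro i hi; simp at hi
  | cons C' e l he hte hv ih =>
    intro i hi
    match i with
    | 0 => simpa using ⟨he, hte⟩
    | (j+1) =>
      have := ih j (by simpa using hi)
      simpa using this

lemma AssimT.trans {E : Finset (Finset α)} {t : Finset α → ℕ} {C₁ C₂ : Finset α} {v : α}
    (hC : ∀ u ∈ C₂, AssimT E t C₁ u) (h : AssimT E t C₂ v) : AssimT E t C₁ v := by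
  induction h with
  | base v hv => exact hC v hv
  | step e W v he hve hWe htW _ ih => exact .step e W v he hve hWe htW ih

lemma assim_of_reachL {E : Finset (Finset α)} {t : Finset α → ℕ} {C : Finset α}
    {l : List (Finset α)} (h : ValidL E t C l) : ∀ v ∈ reachL C l, AssimT E t C v := by
  induction h with
  | nil => exact fun v hv => .base v hv
  | cons C' e l he hte _ ih =>
    intro v hv
    refine AssimT.trans ?_ (ih v (by simpa using hv))
    intro u hu
    rcases Finset.mem_union.1 hu with h' | h'
    · exact .base u h'
    · exact .step e (e ∩ C') u he h' Finset.inter_subset_left hte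
        (fun w hw => .base w (Finset.mem_inter.1 hw).2)

lemma reachL_of_assim_finset {E : Finset (Finset α)} {t : Finset α → ℕ} {C : Finset α}
    {W : Finset α} (h : ∀ w ∈ W, ∃ l, ValidL E t C l ∧ w ∈ reachL C l) :
    ∃ l, ValidL E t C l ∧ W ⊆ reachL C l := by
  classical
  induction W using Finset.induction with
  | empty => exact ⟨[], .nil _, by simp⟩
  | @insert a W ha ih =>
    obtain ⟨l₁, hl₁, hW⟩ := ih (fun w hw => h w (Finset.mem_insert_of_mem hw))
    obtain ⟨l₂, hl₂, haw⟩ := h a (Finset.mem_insert_self _ _)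
    refine ⟨l₁ ++ l₂, hl₁.append hl₂, ?_⟩
    intro x hx
    rw [reachL_append]
    rcases Finset.mem_insert.1 hx with rfl | hx'
    · exact reachL_mono (subset_reachL _ _) _ haw
    · exact subset_reachL _ _ (hW hx')

lemma ValidL.snoc {E : Finset (Finset α)} {t : Finset α → ℕ} {C : Finset α}
    {l : List (Finset α)} {e : Finset α} (h : ValidL E t C l) (he : e ∈ E)
    (hte : t e ≤ (e ∩ reachL C l).card) : ValidL E t C (l ++ [e]) := by
  induction h with
  | nil => exact .cons _ _ _ he (by simpa using hte) (.nil _)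
  | cons C' e' l' he' ht' _ ih => exact .cons _ _ _ he' ht' (ih (by simpa using hte))

lemma reachL_of_assim {E : Finset (Finset α)} {t : Finset α → ℕ} {C : Finset α} {v : α}
    (h : AssimT E t C v) : ∃ l, ValidL E t C l ∧ v ∈ reachL C l := by
  induction h with
  | base v hv => exact ⟨[], .nil _, hv⟩
  | step e W v he hve hWe htW _ ih =>
    obtain ⟨l, hl, hW⟩ := reachL_of_assim_finset ih
    refine ⟨l ++ [e], hl.snoc he ?_, ?_⟩
    · exact htW.trans (Finset.card_le_card fun w hw => Finset.mem_inter.2 ⟨hWe hw, hW hw⟩)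
    · rw [reachL_append]
      exact Finset.mem_union.2 (Or.inr hve)

lemma reachL_take_mono (C : Finset α) (l : List (Finset α)) {i j : ℕ} (h : i ≤ j) :
    reachL C (l.take i) ⊆ reachL C (l.take j) := by
  conv_rhs => rw [← List.take_append_drop i (l.take j)]
  rw [reachL_append, List.take_take, min_eq_left h]
  exact subset_reachL _ _

/-- Lemma 10: let `G = (V, E)` be a hypergraph with minimum core
size `k` for the threshold function `t` (where `1 ≤ t e ≤ |e| - 1` for all edges), and
for each edge `e` let `f e` be a new vertex (pairwise distinct, not in `V`). Let
`G' = (V ∪ {f e : e ∈ E}, {e ∪ {f e} : e ∈ E})` with threshold function `t'` satisfying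
`t' (e ∪ {f e}) = t e`. Then `G'` has minimum core size `k` for `t'`. -/
theorem threshold_minCoreSize_add_private_vertices
    (V : Finset α) (E : Finset (Finset α)) (hE : ∀ e ∈ E, e ⊆ V)
    (t : Finset α → ℕ) (ht : ∀ e ∈ E, 1 ≤ t e ∧ t e ≤ e.card - 1)
    (k : ℕ) (hk : minCoreSizeT V E t = k)
    (f : Finset α → α) (hf : ∀ e ∈ E, f e ∉ V) (hfinj : Set.InjOn f ↑E)
    (t' : Finset α → ℕ) (ht' : ∀ e ∈ E, t' (insert (f e) e) = t e) :
    minCoreSizeT (V ∪ E.image f) (E.image fun e => insert (f e) e) t' = k := by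
  classical
  subst hk
  set V' := V ∪ E.image f with hV'
  set E' := E.image (fun e => insert (f e) e) with hE'
  -- Direction 1: a core of G contained in V is a core of G'.
  have transfer1 : ∀ C : Finset α, ∀ v, AssimT E t C v → AssimT E' t' C v := by
    intro C v hv
    induction hv with
    | base v h => exact .base v h
    | step e W v he hve hWe htW _ ih =>
      exact .step (insert (f e) e) W v (Finset.mem_image_of_mem _ he)
        (Finset.mem_insert_of_mem hve) (hWe.trans (Finset.subset_insert _ _))
        (by rw [ht' e he]; exact htW) ih
  have core1 : ∀ C : Finset α, IsCoreT V E t C → IsCoreT V' E' t' C := by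
    rintro C ⟨hCV, hcov⟩
    refine ⟨hCV.trans Finset.subset_union_left, ?_⟩
    intro e' he' v hv
    obtain ⟨e, he, rfl⟩ := Finset.mem_image.1 he'
    rcases Finset.mem_insert.1 hv with rfl | hv'
    · exact .step (insert (f e) e) e (f e) he' (Finset.mem_insert_self _ _)
        (Finset.subset_insert _ _)
        (by rw [ht' e he]; exact (ht e he).2.trans (Nat.sub_le _ _))
        (fun w hw => transfer1 C w (hcov e he w hw))
    · exact transfer1 C v (hcov e he v hv')
  -- Direction 2: from a core of G' build a core of G of no larger size.
  have core2 : ∀ C' : Finset α, IsCoreT V' E' t' C' →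
      ∃ C, IsCoreT V E t C ∧ C.card ≤ C'.card := by
    rintro C' ⟨hC'V, hcov'⟩
    -- a single valid firing sequence covering every edge of G'
    obtain ⟨l, hl, hcov⟩ : ∃ l, ValidL E' t' C' l ∧ ∀ e' ∈ E', e' ⊆ reachL C' l := by
      obtain ⟨l, hl, hW⟩ := reachL_of_assim_finset (E := E') (t := t') (C := C')
        (W := E'.biUnion id) (fun w hw => by
          obtain ⟨e', he', hwe'⟩ := Finset.mem_biUnion.1 hw
          exact reachL_of_assim (hcov' e' he' w hwe'))
      exact ⟨l, hl, fun e' he' v hv => hW (Finset.mem_biUnion.2 ⟨e', he', hv⟩)⟩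
    set n := l.length with hn
    set assim : ℕ → Finset α := fun i => reachL C' (l.take i) with hassim
    have hassim_mono : ∀ {i j : ℕ}, i ≤ j → assim i ⊆ assim j :=
      fun h => reachL_take_mono _ _ h
    have hPn : ∀ e ∈ E, t e ≤ ((insert (f e) e) ∩ assim n).card := by
      intro e he
      have h1 : insert (f e) e ⊆ assim n := by
        rw [hassim]; simp only [hn, List.take_length]
        exact hcov _ (Finset.mem_image_of_mem _ he)
      rw [Finset.inter_eq_left.2 h1]
      exact ((ht e he).2.trans (Nat.sub_le _ _)).trans
        (Finset.card_le_card (Finset.subset_insert _ _))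
    -- least time at which the threshold of edge e' is reached
    have hQ : ∀ e : Finset α, ∃ i, t e ≤ ((insert (f e) e) ∩ assim i).card ∨ i = n :=
      fun e => ⟨n, Or.inr rfl⟩
    set i₀ : Finset α → ℕ := fun e => Nat.find (hQ e) with hi₀def
    have hPi₀ : ∀ e ∈ E, t e ≤ ((insert (f e) e) ∩ assim (i₀ e)).card := by
      intro e he
      rcases Nat.find_spec (hQ e) with h | h
      · exact h
      · rw [hi₀def]; simp only; rw [h]; exact hPn e he
    have hi₀min : ∀ e, ∀ {i}, t e ≤ ((insert (f e) e) ∩ assim i).card → i₀ e ≤ i :=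
      fun e {i} h => Nat.find_min' (hQ e) (Or.inl h)
    -- replacement vertices
    set S' : Finset (Finset α) :=
      E.filter (fun e => f e ∈ C' ∧ ¬ e ⊆ assim (i₀ e)) with hS'
    have hg : ∀ e ∈ S', (e \ assim (i₀ e)).Nonempty := by
      intro e he
      obtain ⟨u, hu1, hu2⟩ := Finset.not_subset.1 (Finset.mem_filter.1 he).2.2
      exact ⟨u, Finset.mem_sdiff.2 ⟨hu1, hu2⟩⟩
    set C : Finset α := (C' ∩ V) ∪
      S'.attach.image (fun x => (hg x.1 x.2).choose) with hC
    have hCsubV : C ⊆ V := by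
      rw [hC]
      apply Finset.union_subset Finset.inter_subset_right
      intro x hx
      obtain ⟨⟨e, he⟩, _, rfl⟩ := Finset.mem_image.1 hx
      have := (hg e he).choose_spec
      exact hE e (Finset.mem_filter.1 he).1 (Finset.mem_sdiff.1 this).1
    have hCcard : C.card ≤ C'.card := by
      calc C.card ≤ (C' ∩ V).card + (S'.attach.image (fun x => (hg x.1 x.2).choose)).card :=
            Finset.card_union_le _ _
        _ ≤ (C' ∩ V).card + S'.card := by
            gcongr
            exact (Finset.card_image_le).trans (by rw [Finset.card_attach])
        _ ≤ (C' ∩ V).card + (C' \ V).card := by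
            gcongr
            apply Finset.card_le_card_of_injOn f
            · intro e he
              have h1 := Finset.mem_filter.1 he
              exact Finset.mem_sdiff.2 ⟨h1.2.1, hf e h1.1⟩
            · exact hfinj.mono (by intro e he; exact (Finset.mem_filter.1 he).1)
        _ = C'.card := Finset.card_inter_add_card_sdiff _ _
    -- main induction along the firing sequence
    have main : ∀ i, i ≤ n → ValidL E t C ((l.take i).map (· ∩ V)) ∧
        assim i ∩ V ⊆ reachL C ((l.take i).map (· ∩ V)) := by
      intro i
      induction i with
      | zero =>
        intro _
        refine ⟨by simpa using ValidL.nil C, ?_⟩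
        show C' ∩ V ⊆ C
        exact Finset.subset_union_left
      | succ i ih =>
        intro hi1
        have hi : i < n := hi1
        obtain ⟨hval, hsub⟩ := ih hi.le
        set D := reachL C ((l.take i).map (· ∩ V)) with hD
        obtain ⟨he'E, hstep⟩ := hl.get_spec i hi
        set e' := l.get ⟨i, hi⟩ with he'def
        obtain ⟨e, heE, he'⟩ := Finset.mem_image.1 he'E
        have hfeV : f e ∉ V := hf e heE
        have heV : e ⊆ V := hE e heE
        have he'V : e' ∩ V = e := by
          rw [← he']
          ext x
          simp only [Finset.mem_inter, Finset.mem_insert]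
          constructor
          · rintro ⟨rfl | hx, hxV⟩
            · exact absurd hxV hfeV
            · exact hx
          · intro hx; exact ⟨Or.inr hx, heV hx⟩
        have hstep' : t e ≤ ((insert (f e) e) ∩ assim i).card := by
          rw [← he', ht' e heE] at hstep
          exact hstep
        -- the key counting step
        have hkey : t e ≤ (e ∩ D).card := by
          have heD : ∀ x ∈ e ∩ assim i, x ∈ e ∩ D := by
            intro x hx
            obtain ⟨h1, h2⟩ := Finset.mem_inter.1 hx
            exact Finset.mem_inter.2 ⟨h1, hsub (Finset.mem_inter.2 ⟨h2, heV h1⟩)⟩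
          have hfull : e ⊆ assim i → t e ≤ (e ∩ D).card := by
            intro hfull
            have : e ⊆ e ∩ D := fun x hx => heD x (Finset.mem_inter.2 ⟨hx, hfull hx⟩)
            calc t e ≤ e.card := (ht e heE).2.trans (Nat.sub_le _ _)
              _ ≤ (e ∩ D).card := Finset.card_le_card this
          have hsplit : ∀ j, (insert (f e) e) ∩ assim j ⊆ insert (f e) (e ∩ assim j) := by
            intro j x hx
            obtain ⟨h1, h2⟩ := Finset.mem_inter.1 hx
            rcases Finset.mem_insert.1 h1 with rfl | h1'
            · exact Finset.mem_insert_self _ _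
            · exact Finset.mem_insert_of_mem (Finset.mem_inter.2 ⟨h1', h2⟩)
          by_cases hfe : f e ∈ assim i
          · by_cases hfC : f e ∈ C'
            · have hile : i₀ e ≤ i := hi₀min e hstep'
              by_cases hsub₀ : e ⊆ assim (i₀ e)
              · exact hfull (hsub₀.trans (hassim_mono hile))
              · -- e ∈ S', use the replacement vertex
                have heS' : e ∈ S' := Finset.mem_filter.2 ⟨heE, hfC, hsub₀⟩
                set u := (hg e heS').choose with hu_def
                have hu := (hg e heS').choose_spec
                obtain ⟨hue, hua⟩ := Finset.mem_sdiff.1 hu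
                have huC : u ∈ C := by
                  rw [hC]
                  exact Finset.mem_union_right _ (Finset.mem_image.2
                    ⟨⟨e, heS'⟩, Finset.mem_attach _ _, rfl⟩)
                have huD : u ∈ D := subset_reachL _ _ huC
                by_cases hui : u ∈ assim i
                · -- u was assimilated after time i₀ e; count inside assim i
                  have h1 : t e ≤ (e ∩ assim (i₀ e)).card + 1 := by
                    have := (hPi₀ e heE).trans (Finset.card_le_card (hsplit (i₀ e)))
                    calc t e ≤ (insert (f e) (e ∩ assim (i₀ e))).card := this
                      _ ≤ (e ∩ assim (i₀ e)).card + 1 := Finset.card_insert_le _ _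
                  have h2 : insert u (e ∩ assim (i₀ e)) ⊆ e ∩ assim i := by
                    intro x hx
                    rcases Finset.mem_insert.1 hx with rfl | hx'
                    · exact Finset.mem_inter.2 ⟨hue, hui⟩
                    · obtain ⟨ha, hb⟩ := Finset.mem_inter.1 hx'
                      exact Finset.mem_inter.2 ⟨ha, hassim_mono hile hb⟩
                  have h3 : u ∉ e ∩ assim (i₀ e) := fun hx => hua (Finset.mem_inter.1 hx).2
                  calc t e ≤ (e ∩ assim (i₀ e)).card + 1 := h1
                    _ = (insert u (e ∩ assim (i₀ e))).card := (Finset.card_insert_of_notMem h3).symm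
                    _ ≤ (e ∩ assim i).card := Finset.card_le_card h2
                    _ ≤ (e ∩ D).card := Finset.card_le_card (fun x hx => heD x hx)
                · -- u is fresh: add it to the assimilated vertices of e
                  have h1 : t e ≤ (e ∩ assim i).card + 1 := by
                    have := hstep'.trans (Finset.card_le_card (hsplit i))
                    calc t e ≤ (insert (f e) (e ∩ assim i)).card := this
                      _ ≤ (e ∩ assim i).card + 1 := Finset.card_insert_le _ _
                  have h2 : insert u (e ∩ assim i) ⊆ e ∩ D := by
                    intro x hx
                    rcases Finset.mem_insert.1 hx with rfl | hx'
                    · exact Finset.mem_inter.2 ⟨hue, huD⟩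
                    · exact heD x hx'
                  have h3 : u ∉ e ∩ assim i := fun hx => hui (Finset.mem_inter.1 hx).2
                  calc t e ≤ (e ∩ assim i).card + 1 := h1
                    _ = (insert u (e ∩ assim i)).card := (Finset.card_insert_of_notMem h3).symm
                    _ ≤ (e ∩ D).card := Finset.card_le_card h2
            · -- f e got assimilated by firing e' earlier, hence e ⊆ assim i
              rcases mem_of_reachL hfe with h' | ⟨e₂', he₂'l, hfe₂⟩
              · exact absurd h' hfC
              · have he₂'E : e₂' ∈ E' := hl.mem_of e₂' (List.take_subset _ _ he₂'l)
                obtain ⟨e₂, he₂E, he₂'⟩ := Finset.mem_image.1 he₂'E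
                have : e = e₂ := by
                  rw [← he₂'] at hfe₂
                  rcases Finset.mem_insert.1 hfe₂ with h'' | h''
                  · exact hfinj heE he₂E h''
                  · exact absurd (hE e₂ he₂E h'') hfeV
                subst this
                have : e ⊆ assim i := by
                  refine Finset.Subset.trans ?_ (edge_subset_reachL he₂'l)
                  rw [← he₂']; exact Finset.subset_insert _ _
                exact hfull this
          · -- f e not yet assimilated: all threshold witnesses lie in e
            have : (insert (f e) e) ∩ assim i ⊆ e ∩ D := by
              intro x hx
              obtain ⟨h1, h2⟩ := Finset.mem_inter.1 hx
              rcases Finset.mem_insert.1 h1 with rfl | h1'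
              · exact absurd h2 hfe
              · exact heD x (Finset.mem_inter.2 ⟨h1', h2⟩)
            exact hstep'.trans (Finset.card_le_card this)
        -- assemble
        have htake : l.take (i+1) = l.take i ++ [e'] := by
          rw [List.take_succ, he'def]
          simp [List.getElem?_eq_getElem hi]
        constructor
        · rw [htake, List.map_append, List.map_cons, List.map_nil, he'V]
          exact hval.snoc heE hkey
        · rw [htake, List.map_append, List.map_cons, List.map_nil, he'V]
          simp only [hassim, htake]
          rw [reachL_append, reachL_append]
          intro x hx
          simp only [reachL_cons, reachL_nil] at hx ⊢
          obtain ⟨hx1, hx2⟩ := Finset.mem_inter.1 hx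
          rcases Finset.mem_union.1 hx1 with h' | h'
          · exact Finset.mem_union.2 (Or.inl (hsub (Finset.mem_inter.2 ⟨h', hx2⟩)))
          · rw [← he'] at h'
            rcases Finset.mem_insert.1 h' with rfl | h''
            · exact absurd hx2 hfeV
            · exact Finset.mem_union.2 (Or.inr h'')
    -- conclude: C is a core of G
    obtain ⟨hvaln, hsubn⟩ := main n le_rfl
    refine ⟨C, ⟨hCsubV, ?_⟩, hCcard⟩
    intro e he v hv
    have h1 : v ∈ assim n := by
      rw [hassim]; simp only [hn, List.take_length]
      exact hcov _ (Finset.mem_image_of_mem _ he) (Finset.mem_insert_of_mem hv)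
    exact assim_of_reachL hvaln v (hsubn (Finset.mem_inter.2 ⟨h1, hE e he hv⟩))
  -- combine the two directions
  have hne : {m | ∃ C, IsCoreT V E t C ∧ C.card = m}.Nonempty :=
    ⟨V.card, V, ⟨subset_rfl, fun e he v hv => .base v (hE e he hv)⟩, rfl⟩
  have hne' : {m | ∃ C, IsCoreT V' E' t' C ∧ C.card = m}.Nonempty := by
    refine ⟨V'.card, V', ⟨subset_rfl, ?_⟩, rfl⟩
    intro e' he' v hv
    obtain ⟨e, he, rfl⟩ := Finset.mem_image.1 he'
    refine .base v ?_
    rcases Finset.mem_insert.1 hv with rfl | hv'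
    · exact Finset.mem_union_right _ (Finset.mem_image_of_mem _ he)
    · exact Finset.mem_union_left _ (hE e he hv')
  obtain ⟨C₁, hC₁, hcard₁⟩ := Nat.sInf_mem hne
  obtain ⟨C₂, hC₂, hcard₂⟩ := Nat.sInf_mem hne'
  obtain ⟨C₃, hC₃, hc₃⟩ := core2 C₂ hC₂
  have le1 : minCoreSizeT V' E' t' ≤ minCoreSizeT V E t := by
    show sInf {m | ∃ C, IsCoreT V' E' t' C ∧ C.card = m} ≤
      sInf {m | ∃ C, IsCoreT V E t C ∧ C.card = m}
    rw [← hcard₁]; exact Nat.sInf_le ⟨C₁, core1 C₁ hC₁, rfl⟩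
  have le2 : minCoreSizeT V E t ≤ minCoreSizeT V' E' t' := by
    show sInf {m | ∃ C, IsCoreT V E t C ∧ C.card = m} ≤
      sInf {m | ∃ C, IsCoreT V' E' t' C ∧ C.card = m}
    rw [← hcard₂]
    calc sInf {m | ∃ C, IsCoreT V E t C ∧ C.card = m} ≤ C₃.card := Nat.sInf_le ⟨C₃, hC₃, rfl⟩
      _ ≤ C₂.card := hc₃
  exact le_antisymm le1 le2
end
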